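/- arXiv:1611.04447 — 5 statements merged into one kernel-verified Lean document; each statement's English description precedes it below -/
import Mathlib

section
/- Assume gcd(n,s) = 1. For every q-linearized polynomial f over F_{q^n} there exist unique elements a_0, …, a_{m−1} ∈ F_{q^n} such that f ≡ a_0 X + a_1 X^{q^s} + ⋯ + a_{m−1} X^{q^{s(m−1)}} (mod θ_S). In particular, if a_0, …, a_{m−1} ∈ F_{q^n} satisfy Σ_{i=0}^{m−1} a_i u^{q^{si}} = 0 for all u ∈ U_S, then a_0 = ⋯ = a_{m−1} = 0. -/
/-!
Let `σ = Frob^s : x ↦ x^(q^s)`. Since `gcd(n, s) = 1`, `σ` has the same fixed field `F_q` as the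
Frobenius (a point of period `n` and `s` has period `gcd(n, s) = 1`). The classical Moore-matrix
argument then shows that `(σ^i αⱼ)_{i,j}` is invertible for `F_q`-independent `αⱼ`.
Both `f` and `∑ aᵢ X^(q^(si))` evaluate to `F_q`-linear maps, and `θ_S` divides a polynomial iff it
vanishes on `U_S`; so the congruence amounts to the linear system `a ⬝ M = (f(αⱼ))ⱼ` for that
Moore matrix `M`, which has exactly one solution, and the homogeneous system only the trivial one.
-/

open Polynomial Finset
open scoped Classical

/-- A `q`-linearized polynomial: a polynomial of the form `∑ cᵢ X^(q^i)`. -/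
def IsLinearized (q : ℕ) {F : Type} [Field F] (f : Polynomial F) : Prop :=
  ∃ (N : ℕ) (c : ℕ → F), f = ∑ i ∈ Finset.range N, Polynomial.C (c i) * Polynomial.X ^ q ^ i

/-- `θ_S = ∏_{u ∈ U_S} (X - u)`, where `U_S` is the `F_q`-span of the `αᵢ`. -/
noncomputable def thetaS (Fq : Type) {Fqn : Type} [Field Fq] [Field Fqn] [Fintype Fqn]
    [Algebra Fq Fqn] {m : ℕ} (α : Fin m → Fqn) : Polynomial Fqn :=
  ∏ u ∈ Finset.univ.filter (fun u => u ∈ Submodule.span Fq (Set.range α)),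
    (Polynomial.X - Polynomial.C u)

section FixedPoints

variable {K L : Type*} [Field K] [Fintype K] [Field L] [Algebra K L]

theorem exists_algebraMap_eq_of_pow_card_eq {x : L} (hx : x ^ Fintype.card K = x) :
    ∃ c, algebraMap K L c = x := by
  have hroots := roots_map_of_injective_of_card_eq_natDegree (algebraMap K L).injective
    (p := X ^ Fintype.card K - X) (by
      rw [FiniteField.roots_X_pow_card_sub_X,
        FiniteField.X_pow_card_sub_X_natDegree_eq K Fintype.one_lt_card]
      rfl)
  have hx' : x ∈ (map (algebraMap K L) (X ^ Fintype.card K - X)).roots := by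
    rw [mem_roots (map_ne_zero (FiniteField.X_pow_card_sub_X_ne_zero K Fintype.one_lt_card))]
    simp [hx]
  rw [← hroots, FiniteField.roots_X_pow_card_sub_X] at hx'
  simpa using hx'

theorem frobeniusAlgHom_pow_apply (n : ℕ) (x : L) :
    (FiniteField.frobeniusAlgHom K L ^ n) x = x ^ Fintype.card K ^ n := by
  rw [AlgHom.coe_pow, FiniteField.coe_frobeniusAlgHom, pow_iterate]

theorem exists_algebraMap_eq_of_frobeniusAlgHom_pow_apply_eq [Fintype L] {n s : ℕ}
    (hL : Fintype.card L = Fintype.card K ^ n) (hns : n.Coprime s) {x : L}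
    (hx : (FiniteField.frobeniusAlgHom K L ^ s) x = x) : ∃ c, algebraMap K L c = x := by
  have hn : Function.IsPeriodicPt (FiniteField.frobeniusAlgHom K L) n x := by
    rw [Function.IsPeriodicPt, Function.IsFixedPt, ← AlgHom.coe_pow, frobeniusAlgHom_pow_apply,
      ← hL, FiniteField.pow_card]
  have hs : Function.IsPeriodicPt (FiniteField.frobeniusAlgHom K L) s x := by
    rwa [Function.IsPeriodicPt, Function.IsFixedPt, ← AlgHom.coe_pow]
  have h1 := hn.gcd hs
  rw [hns, Function.IsPeriodicPt, Function.IsFixedPt, Function.iterate_one,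
    FiniteField.coe_frobeniusAlgHom] at h1
  exact exists_algebraMap_eq_of_pow_card_eq h1

end FixedPoints

section Moore

variable {K L : Type*} [Field K] [Field L] [Algebra K L]

def mooreMatrix {k : ℕ} (σ : L →ₐ[K] L) (v : Fin k → L) : Matrix (Fin k) (Fin k) L :=
  Matrix.of fun i j => (σ ^ (i : ℕ)) (v j)

theorem sum_mul_pow_apply_sub_eq_zero {R A : Type*} [CommSemiring R] [CommRing A] [Algebra R A]
    (σ : A →ₐ[R] A) {ι : Type*} [Fintype ι] {d v : ι → A} {i : ℕ}
    (h₀ : ∑ j, d j * (σ ^ i) (v j) = 0) (h₁ : ∑ j, d j * (σ ^ (i + 1)) (v j) = 0) :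
    ∑ j, (σ (d j) - d j) * (σ ^ i) (σ (v j)) = 0 := by
  have h := congrArg σ h₀
  simp only [map_sum, map_mul, map_zero, ← AlgHom.mul_apply, ← pow_succ'] at h
  simp only [← AlgHom.mul_apply, ← pow_succ, sub_mul, sum_sub_distrib, h, h₁, sub_zero]

variable (σ : L →ₐ[K] L)

/- After normalising `d (last) = 1`, the vector `σ d - d` solves the system for `σ ∘ v` with the
last vector dropped; so `d` is `σ`-fixed, i.e. `K`-valued, and the equation `i = 0` contradicts
the linear independence of `v`. -/
theorem last_eq_zero_of_sum_mul_pow_apply_eq_zero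
    (hσ : ∀ x, σ x = x → ∃ c, algebraMap K L c = x) {k : ℕ}
    (ih : ∀ {v : Fin k → L}, LinearIndependent K v → ∀ {d : Fin k → L},
      (∀ i : Fin k, ∑ j, d j * (σ ^ (i : ℕ)) (v j) = 0) → d = 0)
    {v : Fin (k + 1) → L} (hv : LinearIndependent K v) {d : Fin (k + 1) → L}
    (hd : ∀ i : Fin (k + 1), ∑ j, d j * (σ ^ (i : ℕ)) (v j) = 0) : d (Fin.last k) = 0 := by
  by_contra hlast
  set D : Fin (k + 1) → L := fun j => (d (Fin.last k))⁻¹ * d j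
  have hD : ∀ i : Fin (k + 1), ∑ j, D j * (σ ^ (i : ℕ)) (v j) = 0 := fun i => by
    simp only [D, mul_assoc, ← mul_sum, hd i, mul_zero]
  have hDlast : D (Fin.last k) = 1 := inv_mul_cancel₀ hlast
  have hfix : (fun j => σ (D (Fin.castSucc j)) - D (Fin.castSucc j)) = 0 := by
    refine ih ((hv.map' σ.toLinearMap (LinearMap.ker_eq_bot.mpr σ.toRingHom.injective)).comp _
      (Fin.castSucc_injective k)) fun i => ?_
    have h := sum_mul_pow_apply_sub_eq_zero σ (hD i.castSucc) (hD i.succ)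
    rwa [Fin.sum_univ_castSucc, hDlast, map_one, sub_self, zero_mul, add_zero] at h
  have hK : ∀ j, ∃ c, algebraMap K L c = D j := by
    refine Fin.lastCases ⟨1, by rw [hDlast, map_one]⟩ fun j => hσ _ ?_
    exact sub_eq_zero.mp (congrFun hfix j)
  choose c hc using hK
  have hc0 : ∑ j, c j • v j = 0 := by
    simpa [Algebra.smul_def, hc] using hD 0
  have := hc (Fin.last k)
  rw [Fintype.linearIndependent_iff.mp hv c hc0, map_zero, hDlast] at this
  exact zero_ne_one this

theorem eq_zero_of_sum_mul_pow_apply_eq_zero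
    (hσ : ∀ x, σ x = x → ∃ c, algebraMap K L c = x) :
    ∀ {k : ℕ} {v : Fin k → L}, LinearIndependent K v → ∀ {d : Fin k → L},
      (∀ i : Fin k, ∑ j, d j * (σ ^ (i : ℕ)) (v j) = 0) → d = 0 := by
  intro k
  induction k with
  | zero => exact fun _ _ _ => Subsingleton.elim _ _
  | succ k ih =>
    intro v hv d hd
    have hlast := last_eq_zero_of_sum_mul_pow_apply_eq_zero σ hσ ih hv hd
    have hinit : (fun j => d (Fin.castSucc j)) = 0 := by
      refine ih (hv.comp _ (Fin.castSucc_injective k)) fun i => ?_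
      simpa [Fin.sum_univ_castSucc, hlast] using hd i.castSucc
    funext j
    exact Fin.lastCases hlast (fun j => congrFun hinit j) j

theorem isUnit_mooreMatrix (hσ : ∀ x, σ x = x → ∃ c, algebraMap K L c = x) {k : ℕ}
    {v : Fin k → L} (hv : LinearIndependent K v) :
    IsUnit (mooreMatrix σ v) := by
  refine Matrix.mulVec_injective_iff_isUnit.mp fun d d' h => sub_eq_zero.mp ?_
  refine eq_zero_of_sum_mul_pow_apply_eq_zero σ hσ hv fun i => ?_
  have := congrFun h i
  simp only [Matrix.mulVec, dotProduct, mooreMatrix, Matrix.of_apply] at this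
  simp only [Pi.sub_apply, sub_mul, sum_sub_distrib, sub_eq_zero]
  simpa only [mul_comm] using this

end Moore

section Theta

variable {K L : Type} [Field K] [Field L] [Fintype L] [Algebra K L] {m : ℕ} (α : Fin m → L)

theorem thetaS_dvd_iff {g : L[X]} :
    thetaS K α ∣ g ↔ ∀ u ∈ Submodule.span K (Set.range α), g.eval u = 0 := by
  constructor
  · intro h u hu
    refine dvd_iff_isRoot.mp (dvd_trans ?_ h)
    exact dvd_prod_of_mem _ (mem_filter.mpr ⟨mem_univ _, hu⟩)
  · intro h
    refine prod_dvd_of_coprime (fun u _ w _ huw => ?_) fun u hu => ?_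
    · exact isCoprime_X_sub_C_of_isUnit_sub (sub_ne_zero.mpr huw).isUnit
    · exact dvd_iff_isRoot.mpr (h u (mem_filter.mp hu).2)

theorem thetaS_dvd_sub_iff {f g : L[X]} (hf : ∃ φ : L →ₗ[K] L, ∀ u, φ u = f.eval u)
    (hg : ∃ ψ : L →ₗ[K] L, ∀ u, ψ u = g.eval u) :
    thetaS K α ∣ f - g ↔ ∀ j, f.eval (α j) = g.eval (α j) := by
  obtain ⟨φ, hφ⟩ := hf
  obtain ⟨ψ, hψ⟩ := hg
  simp only [thetaS_dvd_iff, eval_sub, sub_eq_zero, ← hφ, ← hψ]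
  exact ⟨fun h j => h _ (Submodule.subset_span ⟨j, rfl⟩),
    fun h => LinearMap.eqOn_span' (Set.forall_mem_range.mpr h)⟩

end Theta

theorem exists_linearMap_eq_eval_sum_C_mul_X_pow_card_pow {K L : Type*} [Field K] [Fintype K]
    [Field L] [Algebra K L] {ι : Type*} (t : Finset ι) (c : ι → L) (e : ι → ℕ) :
    ∃ φ : L →ₗ[K] L, ∀ u, φ u = (∑ i ∈ t, C (c i) * X ^ Fintype.card K ^ e i).eval u :=
  ⟨∑ i ∈ t, c i • (FiniteField.frobeniusAlgHom K L ^ e i).toLinearMap, fun u => by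
    simp only [LinearMap.sum_apply, LinearMap.smul_apply,
      AlgHom.toLinearMap_apply, frobeniusAlgHom_pow_apply, smul_eq_mul, eval_finsetSum, eval_mul,
      eval_C, eval_pow, eval_X]⟩

theorem IsLinearized.exists_linearMap_eq_eval {K : Type*} {L : Type} [Field K] [Fintype K] [Field L]
    [Algebra K L] {f : L[X]} (hf : IsLinearized (Fintype.card K) f) :
    ∃ φ : L →ₗ[K] L, ∀ u, φ u = f.eval u := by
  obtain ⟨N, c, rfl⟩ := hf
  exact exists_linearMap_eq_eval_sum_C_mul_X_pow_card_pow _ c fun i => i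

theorem stmt1_general (q n m s : ℕ) (Fq Fqn : Type) [Field Fq] [Fintype Fq] [Field Fqn] [Fintype Fqn]
    [Algebra Fq Fqn] (hq : Fintype.card Fq = q) (hqn : Fintype.card Fqn = q ^ n)
    (hgcd : Nat.gcd n s = 1)
    (α : Fin m → Fqn) (hα : LinearIndependent Fq α) :
    -- every linearized polynomial has a unique representative
    -- a₀X + a₁X^(q^s) + ⋯ + a_{m-1}X^(q^{s(m-1)}) modulo θ_S
    (∀ f : Polynomial Fqn, IsLinearized q f →
      ∃! a : Fin m → Fqn,
        thetaS Fq α ∣ f - ∑ i : Fin m, Polynomial.C (a i) * Polynomial.X ^ q ^ (s * (i : ℕ))) ∧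
    -- in particular, if ∑ aᵢ u^(q^{si}) = 0 for all u ∈ U_S then all aᵢ = 0
    (∀ a : Fin m → Fqn,
      (∀ u ∈ Submodule.span Fq (Set.range α),
        ∑ i : Fin m, a i * u ^ q ^ (s * (i : ℕ)) = 0) → a = 0) := by
  subst hq
  set M := mooreMatrix (FiniteField.frobeniusAlgHom Fq Fqn ^ s) α
  have hM : IsUnit M := isUnit_mooreMatrix _
    (fun _ => exists_algebraMap_eq_of_frobeniusAlgHom_pow_apply_eq hqn hgcd) hα
  have hMvec : ∀ (a : Fin m → Fqn) (j : Fin m),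
      Matrix.vecMul a M j = ∑ i : Fin m, a i * α j ^ Fintype.card Fq ^ (s * (i : ℕ)) := by
    intro a j
    simp only [M, mooreMatrix, Matrix.vecMul, dotProduct, Matrix.of_apply, ← pow_mul,
      frobeniusAlgHom_pow_apply]
  refine ⟨fun f hf => ?_, fun a ha => ?_⟩
  · have hdvd : ∀ a : Fin m → Fqn,
        thetaS Fq α ∣ f - ∑ i : Fin m, C (a i) * X ^ Fintype.card Fq ^ (s * (i : ℕ)) ↔
          Matrix.vecMul a M = fun j => f.eval (α j) := fun a => by
      rw [thetaS_dvd_sub_iff α hf.exists_linearMap_eq_eval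
        (exists_linearMap_eq_eval_sum_C_mul_X_pow_card_pow _ a (s * ·)), funext_iff]
      simp only [hMvec, eval_finsetSum, eval_mul, eval_C, eval_pow, eval_X, eq_comm]
    simp only [hdvd]
    exact Function.Bijective.existsUnique
      ⟨Matrix.vecMul_injective_iff_isUnit.mpr hM, Matrix.vecMul_surjective_iff_isUnit.mpr hM⟩ _
  · refine Matrix.vecMul_injective_iff_isUnit.mpr hM ?_
    show Matrix.vecMul a M = Matrix.vecMul 0 M
    rw [Matrix.zero_vecMul]
    funext j
    rw [hMvec]
    exact ha _ (Submodule.subset_span ⟨j, rfl⟩)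

theorem stmt1 (q n m s : ℕ) (Fq Fqn : Type) [Field Fq] [Fintype Fq] [Field Fqn] [Fintype Fqn]
    [Algebra Fq Fqn] (hq : Fintype.card Fq = q) (hqn : Fintype.card Fqn = q ^ n)
    (hn : 0 < n) (hm : 0 < m) (hmn : m ≤ n)
    (hs : 0 < s) (hgcd : Nat.gcd n s = 1)
    (α : Fin m → Fqn) (hα : LinearIndependent Fq α) :
    -- every linearized polynomial has a unique representative
    -- a₀X + a₁X^(q^s) + ⋯ + a_{m-1}X^(q^{s(m-1)}) modulo θ_S
    (∀ f : Polynomial Fqn, IsLinearized q f →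
      ∃! a : Fin m → Fqn,
        thetaS Fq α ∣ f - ∑ i : Fin m, Polynomial.C (a i) * Polynomial.X ^ q ^ (s * (i : ℕ))) ∧
    -- in particular, if ∑ aᵢ u^(q^{si}) = 0 for all u ∈ U_S then all aᵢ = 0
    (∀ a : Fin m → Fqn,
      (∀ u ∈ Submodule.span Fq (Set.range α),
        ∑ i : Fin m, a i * u ^ q ^ (s * (i : ℕ)) = 0) → a = 0) :=
  stmt1_general q n m s Fq Fqn hq hqn hgcd α hα
end

section
/- Let gcd(n,s) = 1 and let φ be a q-linearized polynomial over F_{q^n}. For t ∈ {0,…,m−1} and a ∈ F_{q^n}, let c_0^{(t)}(a), …, c_{m−1}^{(t)}(a) be the unique elements of F_{q^n} with φ(a X^{q^{ts}}) ≡ Σ_{j=0}^{m−1} c_j^{(t)}(a) X^{q^{js}} (mod θ_S), where φ(a X^{q^{ts}}) denotes the polynomial obtained by substituting a X^{q^{ts}} for X in φ. Suppose there exist a ∈ F_{q^n} and j with c_j^{(0)}(a) ≠ 0, and let j_0 be the largest index j such that c_j^{(0)}(a) ≠ 0 for some a ∈ F_{q^n}. Then for every t with t + j_0 ≤ m−1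 and every j with 0 ≤ j ≤ m−1−t, the following are equivalent: (i) there exists a ∈ F_{q^n} with c_j^{(0)}(a) ≠ 0; (ii) there exists ā ∈ F_{q^n} with c_{j+t}^{(t)}(ā) ≠ 0. -/
open Polynomial Finset
open scoped Classical

namespace AlgHom

variable {K L : Type*} [Field K] [Field L] [Algebra K L] (σ : L →ₐ[K] L)

theorem linearIndependent_apply_sub_self_div
    (hσ : ∀ x, σ x = x → x ∈ Set.range (algebraMap K L)) {m : ℕ} {v : Fin (m + 1) → L}
    (hv : LinearIndependent K v) :
    LinearIndependent K fun i : Fin m => σ (v i.succ / v 0) - v i.succ / v 0 := by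
  have hv0 : v 0 ≠ 0 := hv.ne_zero 0
  have hy : LinearIndependent K fun i => v i / v 0 := by
    simpa [Function.comp_def, div_eq_mul_inv] using hv.map' (LinearMap.mulRight K (v 0)⁻¹)
      (LinearMap.ker_eq_bot.2 (mul_left_injective₀ (inv_ne_zero hv0)))
  rw [← Fin.cons_self_tail fun i => v i / v 0, linearIndependent_finCons] at hy
  obtain ⟨hy, hone⟩ := hy
  simp only [div_self hv0] at hone
  have hker : Disjoint (Submodule.span K (Set.range (Fin.tail fun i => v i / v 0)))
      (LinearMap.ker (σ.toLinearMap - LinearMap.id)) := by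
    refine Submodule.disjoint_def.2 fun x hx hfix => ?_
    obtain ⟨μ, rfl⟩ := hσ x (sub_eq_zero.1 hfix)
    by_contra hμ
    refine hone ?_
    have := Submodule.smul_mem _ μ⁻¹ hx
    rwa [Algebra.smul_def, ← map_mul, inv_mul_cancel₀ (by simpa using hμ), map_one] at this
  exact hy.map hker

theorem sum_mul_pow_apply_eq_neg_sum (γ : ℕ → L) (m : ℕ) (hγ : ∑ l ∈ range (m + 1), γ l = 0)
    (x : L) :
    ∑ l ∈ range (m + 1), γ l * (σ ^ l) x =
      -∑ l ∈ range m, (∑ k ∈ range (l + 1), γ k) * (σ ^ l) (σ x - x) := by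
  have hparts := sum_range_by_parts (fun l => (σ ^ l) x) γ (m + 1)
  simp only [smul_eq_mul, add_tsub_cancel_right, hγ, mul_zero, zero_sub] at hparts
  simp_rw [mul_comm (γ _), hparts, map_sub, ← mul_apply, ← pow_succ, mul_comm]

theorem eq_zero_of_sum_mul_pow_apply_eq_zero
    (hσ : ∀ x, σ x = x → x ∈ Set.range (algebraMap K L)) {m : ℕ} {v : Fin m → L}
    (hv : LinearIndependent K v) {γ : ℕ → L}
    (hγ : ∀ i, ∑ l ∈ range m, γ l * (σ ^ l) (v i) = 0) : ∀ l < m, γ l = 0 := by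
  induction m generalizing γ with
  | zero => simp
  | succ m ih =>
    have hv0 : v 0 ≠ 0 := hv.ne_zero 0
    set γ' : ℕ → L := fun l => γ l * (σ ^ l) (v 0)
    have hscale (x : L) : ∑ l ∈ range (m + 1), γ l * (σ ^ l) (v 0 * x) =
        ∑ l ∈ range (m + 1), γ' l * (σ ^ l) x := by
      simp only [map_mul, γ', mul_assoc]
    have htotal : ∑ l ∈ range (m + 1), γ' l = 0 := by
      have := hγ 0
      rw [← mul_one (v 0), hscale] at this
      simpa only [map_one, mul_one] using this
    have hpartial : ∀ l < m, ∑ k ∈ range (l + 1), γ' k = 0 := by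
      refine ih (σ.linearIndependent_apply_sub_self_div hσ hv) fun i => ?_
      have := hγ i.succ
      rwa [← mul_div_cancel₀ (v i.succ) hv0, hscale, sum_mul_pow_apply_eq_neg_sum σ γ' m htotal,
        neg_eq_zero] at this
    have hzero : ∀ l ≤ m + 1, ∑ k ∈ range l, γ' k = 0 := by
      rintro (_ | l) hl
      · simp
      · rcases Nat.lt_or_ge l m with h | h
        · exact hpartial l h
        · rwa [show l = m by omega]
    intro l hl
    have : γ' l = 0 := by
      rw [← sum_range_succ_sub_sum γ', hzero _ hl, hzero _ hl.le, sub_zero]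
    exact (mul_eq_zero.1 this).resolve_right ((map_ne_zero (σ ^ l)).2 hv0)

theorem exists_eq_sum_mul_pow_apply
    (hσ : ∀ x, σ x = x → x ∈ Set.range (algebraMap K L)) {m : ℕ} {α : Fin m → L}
    (hα : LinearIndependent K α) (f : L →ₗ[K] L) :
    ∃ γ : ℕ → L, ∀ u ∈ Submodule.span K (Set.range α),
      f u = ∑ l ∈ range m, γ l * (σ ^ l) u := by
  set U := Submodule.span K (Set.range α)
  have : FiniteDimensional K U := FiniteDimensional.span_of_finite K (Set.finite_range α)
  set b : Fin m → (U →ₗ[K] L) := fun l => (σ ^ (l : ℕ)).toLinearMap ∘ₗ U.subtype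
  have hb : LinearIndependent L b := by
    refine Fintype.linearIndependent_iff.2 fun g hg l => ?_
    have := σ.eq_zero_of_sum_mul_pow_apply_eq_zero hσ hα
      (γ := fun l => if h : l < m then g ⟨l, h⟩ else 0) (fun i => ?_) l l.2
    · simpa using this
    have := LinearMap.congr_fun hg ⟨α i, Submodule.subset_span (Set.mem_range_self i)⟩
    simpa [b, Finset.sum_range] using this
  have hspan := hb.span_eq_top_of_card_eq_finrank'
    (by rw [Module.finrank_linearMap_self, finrank_span_eq_card hα])
  obtain ⟨g, hg⟩ := (Submodule.mem_span_range_iff_exists_fun L).1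
    (hspan ▸ Submodule.mem_top : f ∘ₗ U.subtype ∈ _)
  refine ⟨fun l => if h : l < m then g ⟨l, h⟩ else 0, fun u hu => ?_⟩
  have := LinearMap.congr_fun hg ⟨u, hu⟩
  simpa [b, Finset.sum_range] using this.symm

end AlgHom

namespace FiniteField

variable {K L : Type*} [Field K] [Fintype K] [Field L] [Algebra K L]

local notation "q" => Fintype.card K
local notation "n" => Module.finrank K L

theorem frobeniusAlgHom_pow_apply (k : ℕ) (x : L) : (frobeniusAlgHom K L ^ k) x = x ^ q ^ k := by
  rw [AlgHom.coe_pow, coe_frobeniusAlgHom, pow_iterate]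

theorem mul_pow_card_pow_pow_eq_sum_shift (s : ℕ) {m t : ℕ} (ht : t ≤ m) {x b : L} {k : ℕ}
    {e : ℕ → L} (he : x ^ q ^ k = ∑ l ∈ range m, e l * x ^ q ^ (s * l))
    (hvan : ∀ l < m, m ≤ l + t → b * e l = 0) :
    b * (x ^ q ^ k) ^ q ^ (s * t) =
      ∑ l ∈ range m, (if t ≤ l then b * e (l - t) ^ q ^ (s * t) else 0) * x ^ q ^ (s * l) := by
  have hterm (l : ℕ) : b * (e l * x ^ q ^ (s * l)) ^ q ^ (s * t) =
      b * e l ^ q ^ (s * t) * x ^ q ^ (s * (l + t)) := by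
    rw [mul_pow, ← pow_mul, ← pow_add, mul_add, mul_assoc]
  rw [he, ← frobeniusAlgHom_pow_apply, map_sum, mul_sum]
  simp only [frobeniusAlgHom_pow_apply, hterm]
  obtain ⟨r, rfl⟩ := Nat.exists_eq_add_of_le ht
  calc ∑ l ∈ range (t + r), b * e l ^ q ^ (s * t) * x ^ q ^ (s * (l + t))
      = ∑ l ∈ range r, b * e l ^ q ^ (s * t) * x ^ q ^ (s * (l + t)) := by
        rw [add_comm, sum_range_add, add_eq_left]
        refine sum_eq_zero fun l hl => ?_
        obtain h | h := mul_eq_zero.1 (hvan (r + l) (by simp at hl; omega) (by omega)) <;> simp [h]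
    _ = _ := by
        rw [eq_comm, sum_range_add,
          sum_eq_zero fun l hl => by rw [if_neg (by simpa using hl), zero_mul], zero_add]
        refine sum_congr rfl fun l _ => ?_
        rw [if_pos (Nat.le_add_right t l), Nat.add_sub_cancel_left, add_comm t l]

variable [Fintype L]

theorem pow_card_pow_mod_finrank (x : L) (i : ℕ) : x ^ q ^ (i % n) = x ^ q ^ i := by
  rw [← frobeniusAlgHom_pow_apply, ← frobeniusAlgHom_pow_apply, ← orderOf_frobeniusAlgHom,
    pow_mod_orderOf]

theorem mem_range_algebraMap_of_pow_card_pow_eq_self {s : ℕ}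
    (hs : Nat.Coprime n s) {x : L} (hx : x ^ q ^ s = x) :
    x ∈ Set.range (algebraMap K L) := by
  set φ := frobeniusAlgEquivOfAlgebraic K L
  have hfix : Subgroup.zpowers (φ ^ s) ≤ MulAction.stabilizer Gal(L/K) x := by
    rw [Subgroup.zpowers_le, MulAction.mem_stabilizer_iff, AlgEquiv.smul_def, AlgEquiv.coe_pow,
      coe_frobeniusAlgEquivOfAlgebraic_iterate]
    exact hx
  have hφ : φ ∈ Subgroup.zpowers (φ ^ s) := by
    rw [mem_zpowers_pow_iff, orderOf_frobeniusAlgEquivOfAlgebraic]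
    exact hs.symm
  refine (IsGalois.mem_range_algebraMap_iff_fixed x).2 fun f => ?_
  obtain ⟨k, rfl⟩ := (bijective_frobeniusAlgEquivOfAlgebraic_pow K L).2 f
  exact hfix (Subgroup.pow_mem _ hφ k)

theorem eq_zero_of_sum_mul_pow_card_pow_eq_zero {s : ℕ} (hs : Nat.Coprime n s)
    {m : ℕ} {v : Fin m → L} (hv : LinearIndependent K v) {γ : ℕ → L}
    (hγ : ∀ i, ∑ l ∈ range m, γ l * v i ^ q ^ (s * l) = 0) : ∀ l < m, γ l = 0 :=
  (frobeniusAlgHom K L ^ s).eq_zero_of_sum_mul_pow_apply_eq_zero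
    (fun x hx => mem_range_algebraMap_of_pow_card_pow_eq_self hs
      (by rwa [frobeniusAlgHom_pow_apply] at hx)) hv
    (by simpa only [← pow_mul, frobeniusAlgHom_pow_apply] using hγ)

theorem exists_pow_card_pow_eq_sum {s : ℕ} (hs : Nat.Coprime n s)
    {m : ℕ} {α : Fin m → L} (hα : LinearIndependent K α) (k : ℕ) :
    ∃ d : ℕ → L, ∀ u ∈ Submodule.span K (Set.range α),
      u ^ q ^ k = ∑ l ∈ range m, d l * u ^ q ^ (s * l) := by
  obtain ⟨d, hd⟩ := (frobeniusAlgHom K L ^ s).exists_eq_sum_mul_pow_apply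
    (fun x hx => mem_range_algebraMap_of_pow_card_pow_eq_self hs
      (by rwa [frobeniusAlgHom_pow_apply] at hx)) hα (frobeniusAlgHom K L ^ k).toLinearMap
  exact ⟨d, by simpa only [AlgHom.toLinearMap_apply, ← pow_mul, frobeniusAlgHom_pow_apply] using hd⟩

theorem exists_sum_mul_pow_card_pow_ne_zero_iff (E : ℕ → L) :
    (∃ a : L, ∑ ρ ∈ range n, E ρ * a ^ q ^ ρ ≠ 0) ↔ ∃ ρ < n, E ρ ≠ 0 := by
  constructor
  · rintro ⟨a, ha⟩
    by_contra! h
    exact ha (sum_eq_zero fun ρ hρ => by rw [h ρ (mem_range.1 hρ), zero_mul])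
  · rintro ⟨ρ, hρ, hE⟩
    by_contra! h
    refine hE (eq_zero_of_sum_mul_pow_card_pow_eq_zero (s := 1) (Nat.coprime_one_right _)
      (Module.finBasis K L).linearIndependent (fun i => ?_) ρ hρ)
    simpa only [one_mul] using h (Module.finBasis K L i)

variable {s m : ℕ} {α : Fin m → L}

theorem eq_sum_mul_pow_card_pow_of_expansions (hs : Nat.Coprime n s) (hα : LinearIndependent K α)
    {β : ℕ → L} {k : ℕ} {c : L → ℕ → L} {E : ℕ → ℕ → L}
    (hc : ∀ a i, ∑ ρ ∈ range n, β ρ * (a * α i ^ q ^ k) ^ q ^ ρ =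
      ∑ l ∈ range m, c a l * α i ^ q ^ (s * l))
    (hE : ∀ ρ < n, ∀ i, β ρ * (α i ^ q ^ ρ) ^ q ^ k = ∑ l ∈ range m, E ρ l * α i ^ q ^ (s * l))
    (a : L) : ∀ l < m, c a l = ∑ ρ ∈ range n, E ρ l * a ^ q ^ ρ := by
  have := eq_zero_of_sum_mul_pow_card_pow_eq_zero hs hα
    (γ := fun l => c a l - ∑ ρ ∈ range n, E ρ l * a ^ q ^ ρ) fun i => ?_
  · exact fun l hl => sub_eq_zero.1 (this l hl)
  simp only [sub_mul, sum_sub_distrib, ← hc, sum_mul]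
  rw [sum_comm, sub_eq_zero]
  refine sum_congr rfl fun ρ hρ => ?_
  simp only [mul_right_comm _ (a ^ q ^ ρ), ← sum_mul, ← hE ρ (mem_range.1 hρ) i]
  rw [mul_pow, ← pow_mul, ← pow_mul, mul_comm (q ^ k)]
  ring

theorem exists_ne_zero_iff_of_expansions (hs : Nat.Coprime n s) (hα : LinearIndependent K α)
    {β : ℕ → L} {d : ℕ → ℕ → L}
    (hd : ∀ ρ i, α i ^ q ^ ρ = ∑ l ∈ range m, d ρ l * α i ^ q ^ (s * l))
    {t : ℕ} (ht : t ≤ m) (hvan : ∀ ρ < n, ∀ l < m, m ≤ l + t → β ρ * d ρ l = 0)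
    {c : L → ℕ → L} (hc : ∀ a i, ∑ ρ ∈ range n, β ρ * (a * α i ^ q ^ (s * t)) ^ q ^ ρ =
      ∑ l ∈ range m, c a l * α i ^ q ^ (s * l))
    {j : ℕ} (hj : j + t < m) :
    (∃ a, c a (j + t) ≠ 0) ↔ ∃ ρ < n, β ρ * d ρ j ≠ 0 := by
  have hcoeff := eq_sum_mul_pow_card_pow_of_expansions hs hα hc
    (fun ρ hρ i => mul_pow_card_pow_pow_eq_sum_shift s ht (hd ρ i) (hvan ρ hρ))
  simp only [hcoeff _ _ hj, exists_sum_mul_pow_card_pow_ne_zero_iff,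
    if_pos (Nat.le_add_left t j), Nat.add_sub_cancel, mul_ne_zero_iff, ne_eq,
    pow_eq_zero_iff (pow_ne_zero _ Fintype.card_ne_zero)]

end FiniteField

theorem IsLinearized.exists_eval_eq_sum {K L : Type} [Field K] [Fintype K] [Field L] [Fintype L]
    [Algebra K L] {φ : L[X]} (hφ : IsLinearized (Fintype.card K) φ) :
    ∃ β : ℕ → L, ∀ x, φ.eval x =
      ∑ ρ ∈ range (Module.finrank K L), β ρ * x ^ Fintype.card K ^ ρ := by
  obtain ⟨N, b, rfl⟩ := hφ
  set n := Module.finrank K L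
  refine ⟨fun ρ => ∑ i ∈ (range N).filter (· % n = ρ), b i, fun x => ?_⟩
  rw [eval_finsetSum, ← sum_fiberwise_of_maps_to (g := (· % n)) (t := range n)
    fun i _ => mem_range.2 (Nat.mod_lt i Module.finrank_pos)]
  refine sum_congr rfl fun ρ _ => ?_
  rw [sum_mul]
  refine sum_congr rfl fun i hi => ?_
  rw [eval_mul, eval_C, eval_pow, eval_X, ← (mem_filter.1 hi).2,
    FiniteField.pow_card_pow_mod_finrank]

theorem eval_eq_of_thetaS_dvd {K L : Type} [Field K] [Field L] [Fintype L] [Algebra K L] {m : ℕ}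
    {α : Fin m → L} {f g : L[X]} (h : thetaS K α ∣ f - g) {u : L}
    (hu : u ∈ Submodule.span K (Set.range α)) : f.eval u = g.eval u := by
  have hθ : (thetaS K α).eval u = 0 := by
    rw [thetaS, eval_prod]
    exact prod_eq_zero (mem_filter.2 ⟨mem_univ u, hu⟩) (by simp)
  simpa [hθ, sub_eq_zero] using eval_dvd (x := u) h

theorem stmt2_general (q n m s : ℕ) (Fq Fqn : Type) [Field Fq] [Fintype Fq] [Field Fqn] [Fintype Fqn]
    [Algebra Fq Fqn] (hq : Fintype.card Fq = q) (hqn : Fintype.card Fqn = q ^ n)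
    (hm : 0 < m)
    (hgcd : Nat.gcd n s = 1)
    (α : Fin m → Fqn) (hα : LinearIndependent Fq α)
    (φ : Polynomial Fqn) (hφ : IsLinearized q φ)
    -- `c t a j` is the coefficient `c_j^{(t)}(a)`:
    -- φ(a X^{q^{ts}}) ≡ ∑_{j<m} c_j^{(t)}(a) X^{q^{js}}  (mod θ_S)
    (c : ℕ → Fqn → ℕ → Fqn)
    (hc : ∀ t < m, ∀ a : Fqn,
      thetaS Fq α ∣
        φ.comp (Polynomial.C a * Polynomial.X ^ q ^ (s * t)) -
          ∑ j ∈ Finset.range m, Polynomial.C (c t a j) * Polynomial.X ^ q ^ (s * j))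
    (j₀ : ℕ)
    -- j₀ is the largest such index
    (hj₀max : ∀ j < m, (∃ a : Fqn, c 0 a j ≠ 0) → j ≤ j₀) :
    ∀ t : ℕ, t + j₀ ≤ m - 1 → ∀ j : ℕ, j ≤ m - 1 - t →
      ((∃ a : Fqn, c 0 a j ≠ 0) ↔ (∃ a : Fqn, c t a (j + t) ≠ 0)) := by
  subst hq
  obtain rfl : Module.finrank Fq Fqn = n :=
    Nat.pow_right_injective Fintype.one_lt_card (Module.card_eq_pow_finrank.symm.trans hqn)
  obtain ⟨β, hβ⟩ := hφ.exists_eval_eq_sum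
  choose d hd using fun ρ => FiniteField.exists_pow_card_pow_eq_sum hgcd hα ρ
  have hα_mem (i : Fin m) : α i ∈ Submodule.span Fq (Set.range α) :=
    Submodule.subset_span (Set.mem_range_self i)
  have hcoeff (t j : ℕ) (ht : t < m)
      (hvan : ∀ ρ < Module.finrank Fq Fqn, ∀ l < m, m ≤ l + t → β ρ * d ρ l = 0)
      (hj : j + t < m) :
      (∃ a, c t a (j + t) ≠ 0) ↔ ∃ ρ < Module.finrank Fq Fqn, β ρ * d ρ j ≠ 0 :=
    FiniteField.exists_ne_zero_iff_of_expansions hgcd hα (fun ρ i => hd ρ _ (hα_mem i)) ht.le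
      hvan (fun a i => by
        simpa [hβ, eval_finsetSum] using eval_eq_of_thetaS_dvd (hc t ht a) (hα_mem i)) hj
  have hmax : ∀ ρ < Module.finrank Fq Fqn, ∀ l < m, j₀ < l → β ρ * d ρ l = 0 := by
    intro ρ hρ l hl hlj
    by_contra h
    have := hj₀max l hl ((hcoeff 0 l hm (by omega) hl).2 ⟨ρ, hρ, h⟩)
    omega
  intro t ht j hj
  exact (hcoeff 0 j hm (by omega) (by omega)).trans
    (hcoeff t j (by omega) (fun ρ hρ l hl hlt => hmax ρ hρ l hl (by omega)) (by omega)).symm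

theorem stmt2 (q n m s : ℕ) (Fq Fqn : Type) [Field Fq] [Fintype Fq] [Field Fqn] [Fintype Fqn]
    [Algebra Fq Fqn] (hq : Fintype.card Fq = q) (hqn : Fintype.card Fqn = q ^ n)
    (hn : 0 < n) (hm : 0 < m) (hmn : m ≤ n)
    (hs : 0 < s) (hgcd : Nat.gcd n s = 1)
    (α : Fin m → Fqn) (hα : LinearIndependent Fq α)
    (φ : Polynomial Fqn) (hφ : IsLinearized q φ)
    -- `c t a j` is the coefficient `c_j^{(t)}(a)`:
    -- φ(a X^{q^{ts}}) ≡ ∑_{j<m} c_j^{(t)}(a) X^{q^{js}}  (mod θ_S)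
    (c : ℕ → Fqn → ℕ → Fqn)
    (hc : ∀ t < m, ∀ a : Fqn,
      thetaS Fq α ∣
        φ.comp (Polynomial.C a * Polynomial.X ^ q ^ (s * t)) -
          ∑ j ∈ Finset.range m, Polynomial.C (c t a j) * Polynomial.X ^ q ^ (s * j))
    -- there exist a and j with c_j^{(0)}(a) ≠ 0
    (j₀ : ℕ) (hj₀m : j₀ < m) (hj₀ : ∃ a : Fqn, c 0 a j₀ ≠ 0)
    -- j₀ is the largest such index
    (hj₀max : ∀ j < m, (∃ a : Fqn, c 0 a j ≠ 0) → j ≤ j₀) :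
    ∀ t : ℕ, t + j₀ ≤ m - 1 → ∀ j : ℕ, j ≤ m - 1 - t →
      ((∃ a : Fqn, c 0 a j ≠ 0) ↔ (∃ a : Fqn, c t a (j + t) ≠ 0)) :=
  stmt2_general q n m s Fq Fqn hq hqn hm hgcd α hα φ hφ c hc j₀ hj₀max
end

section
/- Let k, m, n be positive integers with k < m ≤ n and gcd(n,s) = 1. Let ψ : F_{q^n} → F_{q^n} be an F_q-linear map such that for every f ∈ G_{k,s} there exists g ∈ G_{k,s} with f(ψ(u)) = g(u) for all u ∈ U_S. Then there exists b ∈ F_{q^n} such that ψ(u) = b·u for all u ∈ U_S. -/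
/-!
Let `σ x = x ^ q ^ s`; since `gcd(n, s) = 1` it generates `Gal(F_{q^n}/F_q)`, so its fixed
field is `F_q`. A `σ`-polynomial `∑_{j ≤ d} c_j σ^j` with `c_d ≠ 0` vanishes on no
`F_q`-subspace of dimension `> d`: if it vanishes on `W ∋ v ≠ 0`, then `x ↦ p(σ)(v x)` is a
`σ`-polynomial vanishing at `1`, so it factors as `r(σ) ∘ (σ - 1)` with `deg r = d - 1`, and
`σ - 1` has the one-dimensional kernel `F_q`.

Applying the hypothesis to `f = X` gives `ψ = B(σ)` on `U_S` with `deg B < k`. If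
`d = deg B > 0`, applying it to `f = X ^ q ^ (s (k - d))` gives `σ^(k-d) ∘ B(σ) = B'(σ)` on
`U_S` with `deg B' < k`: a `σ`-polynomial of degree exactly `k` vanishing on the
`m`-dimensional `U_S`, contradicting `k < m`.
-/

open Polynomial Module

theorem Submodule.finrank_le_finrank_map_add_finrank_ker {K V V₂ : Type*} [DivisionRing K]
    [AddCommGroup V] [Module K V] [AddCommGroup V₂] [Module K V₂] [FiniteDimensional K V]
    (f : V →ₗ[K] V₂) (W : Submodule K V) :
    finrank K W ≤ finrank K (W.map f) + finrank K (LinearMap.ker f) := by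
  have h := (f.domRestrict W).finrank_range_add_finrank_ker
  rw [LinearMap.range_domRestrict, LinearMap.ker_domRestrict] at h
  have hker : finrank K ((LinearMap.ker f).comap W.subtype) ≤ finrank K (LinearMap.ker f) := by
    rw [← Submodule.finrank_map_subtype_eq]
    exact Submodule.finrank_mono (Submodule.map_comap_le _ _)
  omega

namespace Polynomial

theorem natDegree_sum_range_monomial_lt {R : Type*} [Semiring R] {k : ℕ} (hk : 0 < k)
    (b : ℕ → R) : (∑ i ∈ Finset.range k, monomial i (b i)).natDegree < k := by
  have := natDegree_sum_le_of_forall_le (Finset.range k) (n := k - 1) (fun i ↦ monomial i (b i))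
    fun i hi ↦ (natDegree_monomial_le _).trans (by simp at hi; omega)
  omega

variable {K L : Type*} [Field K] [Field L] [Algebra K L] (σ : L →ₐ[K] L)

/-- `p = ∑ aⱼ Xʲ` acts as the `σ`-polynomial `x ↦ ∑ aⱼ σʲ(x)`. -/
def linearizedEval (x : L) : L[X] →ₗ[L] L :=
  lsum fun j => LinearMap.mulRight L ((σ ^ j) x)

noncomputable def linearizedTwist (v : L) : L[X] →ₗ[L] L[X] :=
  lsum fun j => monomial j ∘ₗ LinearMap.mulRight L ((σ ^ j) v)

@[simp]
theorem linearizedEval_monomial (x a : L) (j : ℕ) :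
    linearizedEval σ x (monomial j a) = a * (σ ^ j) x := by
  simp [linearizedEval]

@[simp]
theorem linearizedEval_C (x a : L) : linearizedEval σ x (C a) = a * x := by
  simp [← monomial_zero_left]

@[simp]
theorem linearizedTwist_monomial (v a : L) (j : ℕ) :
    linearizedTwist σ v (monomial j a) = monomial j (a * (σ ^ j) v) := by
  simp [linearizedTwist]

theorem linearizedEval_one (p : L[X]) : linearizedEval σ 1 p = p.eval 1 := by
  induction p using Polynomial.induction_on' with
  | add p q hp hq => simp [hp, hq]
  | monomial j a => simp

theorem linearizedEval_linearizedTwist (v x : L) (p : L[X]) :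
    linearizedEval σ x (linearizedTwist σ v p) = linearizedEval σ (v * x) p := by
  induction p using Polynomial.induction_on' with
  | add p q hp hq => simp only [map_add, hp, hq]
  | monomial j a => simp [mul_assoc]

theorem coeff_linearizedTwist (v : L) (p : L[X]) (j : ℕ) :
    (linearizedTwist σ v p).coeff j = p.coeff j * (σ ^ j) v := by
  induction p using Polynomial.induction_on' with
  | add p q hp hq => simp only [map_add, coeff_add, hp, hq, add_mul]
  | monomial i a =>
    simp only [linearizedTwist_monomial, coeff_monomial]
    split_ifs with h <;> simp [h]

theorem coeff_linearizedTwist_natDegree_ne_zero {v : L} (hv : v ≠ 0) {p : L[X]} (hp : p ≠ 0) :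
    (linearizedTwist σ v p).coeff p.natDegree ≠ 0 := by
  rw [coeff_linearizedTwist]
  exact mul_ne_zero (leadingCoeff_ne_zero.mpr hp) ((_root_.map_ne_zero _).mpr hv)

theorem natDegree_linearizedTwist {v : L} (hv : v ≠ 0) {p : L[X]} (hp : p ≠ 0) :
    (linearizedTwist σ v p).natDegree = p.natDegree := by
  refine natDegree_eq_of_le_of_coeff_ne_zero ?_ (coeff_linearizedTwist_natDegree_ne_zero σ hv hp)
  rw [natDegree_le_iff_coeff_eq_zero]
  intro N hN
  rw [coeff_linearizedTwist, coeff_eq_zero_of_natDegree_lt hN, zero_mul]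

theorem linearizedEval_X_sub_C_one_mul (x : L) (p : L[X]) :
    linearizedEval σ x ((X - C 1) * p) = linearizedEval σ (σ x - x) p := by
  induction p using Polynomial.induction_on' with
  | add p q hp hq => simp only [mul_add, map_add, hp, hq]
  | monomial j a =>
    rw [sub_mul, X_mul_monomial, C_mul_monomial, one_mul]
    simp [pow_succ, mul_sub]

theorem linearizedEval_X_pow_mul_map (x : L) (p : L[X]) (t : ℕ) :
    linearizedEval σ x (X ^ t * p.map (σ ^ t : L →ₐ[K] L).toRingHom)
      = (σ ^ t) (linearizedEval σ x p) := by
  induction p using Polynomial.induction_on' with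
  | add p q hp hq => simp only [Polynomial.map_add, mul_add, map_add, hp, hq]
  | monomial j a =>
    rw [map_monomial, X_pow_mul_monomial, linearizedEval_monomial, linearizedEval_monomial,
      map_mul, add_comm, pow_add, AlgHom.mul_apply]
    rfl

theorem finrank_le_natDegree_of_linearizedEval_eq_zero [FiniteDimensional K L]
    (hσ : ∀ x, σ x = x → x ∈ Set.range (algebraMap K L)) {p : L[X]} (hp : p ≠ 0)
    {W : Submodule K L} (hW : ∀ x ∈ W, linearizedEval σ x p = 0) :
    finrank K W ≤ p.natDegree := by
  induction h : p.natDegree using Nat.strong_induction_on generalizing p W with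
  | _ d ih =>
  rcases eq_or_ne W ⊥ with rfl | hW_ne
  · simp
  obtain ⟨v, hvW, hv⟩ := Submodule.exists_mem_ne_zero_of_ne_bot hW_ne
  set p' := linearizedTwist σ v p
  have hp' : p' ≠ 0 := fun h0 ↦
    coeff_linearizedTwist_natDegree_ne_zero σ hv hp (by simp [p', h0])
  have hroot : p'.IsRoot 1 := by
    rw [IsRoot, ← linearizedEval_one σ, linearizedEval_linearizedTwist, mul_one]
    exact hW v hvW
  obtain ⟨r, hr⟩ := dvd_iff_isRoot.mpr hroot
  have hr0 : r ≠ 0 := by rintro rfl; simp [hr] at hp'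
  have hdeg : d = r.natDegree + 1 := by
    have hp'deg : p'.natDegree = d := h ▸ natDegree_linearizedTwist σ hv hp
    rw [← hp'deg, hr, natDegree_mul (X_sub_C_ne_zero 1) hr0, natDegree_X_sub_C, add_comm]
  -- `r(σ)(T x) = p'(σ)(v⁻¹ x) = p(σ)(x)`
  set T : L →ₗ[K] L := (σ.toLinearMap - LinearMap.id) ∘ₗ LinearMap.mulLeft K v⁻¹
  have hTW : finrank K (W.map T) ≤ r.natDegree := by
    refine ih _ (by omega) hr0 (fun y hy ↦ ?_) rfl
    obtain ⟨x, hx, rfl⟩ := Submodule.mem_map.mp hy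
    have : linearizedEval σ (v⁻¹ * x) p' = 0 := by
      rw [linearizedEval_linearizedTwist, mul_inv_cancel_left₀ hv]
      exact hW x hx
    rwa [hr, linearizedEval_X_sub_C_one_mul] at this
  have hker : finrank K (LinearMap.ker T) ≤ 1 := by
    refine (Submodule.finrank_mono (s := LinearMap.ker T) (t := K ∙ v) fun x hx ↦ ?_).trans
      (finrank_span_singleton hv).le
    obtain ⟨c, hc⟩ := hσ (v⁻¹ * x) (by simpa [T, sub_eq_zero] using hx)
    rw [Submodule.mem_span_singleton]
    exact ⟨c, by rw [Algebra.smul_def, hc, mul_comm, mul_inv_cancel_left₀ hv]⟩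
  have := Submodule.finrank_le_finrank_map_add_finrank_ker T W
  omega

theorem natDegree_eq_zero_of_forall_exists_linearizedEval_eq [FiniteDimensional K L]
    (hσ : ∀ x, σ x = x → x ∈ Set.range (algebraMap K L)) {W : Submodule K L} {k : ℕ}
    (hkW : k < finrank K W) {B : L[X]} (hBk : B.natDegree < k)
    (hB : ∀ t < k, ∃ B' : L[X], B'.natDegree < k ∧
      ∀ u ∈ W, (σ ^ t) (linearizedEval σ u B) = linearizedEval σ u B') :
    B.natDegree = 0 := by
  by_contra hd
  have hB_ne : B ≠ 0 := by rintro rfl; simp at hd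
  set t := k - B.natDegree
  obtain ⟨B', hB'k, hB'⟩ := hB t (by omega)
  -- `P(σ) = σ^t ∘ B(σ) - B'(σ)`
  set P := X ^ t * B.map (σ ^ t).toRingHom - B'
  have hPk : P.natDegree = k := by
    have hB_map : (B.map (σ ^ t).toRingHom) ≠ 0 :=
      (Polynomial.map_ne_zero_iff (σ ^ t).toRingHom.injective).mpr hB_ne
    have : (X ^ t * B.map (σ ^ t).toRingHom).natDegree = k := by
      rw [natDegree_X_pow_mul _ hB_map, natDegree_map]
      omega
    rw [natDegree_sub_eq_left_of_natDegree_lt (by omega), this]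
  have hP : P ≠ 0 := by rintro h; simp [h] at hPk; omega
  have hPW : ∀ u ∈ W, linearizedEval σ u P = 0 := fun u hu ↦ by
    rw [map_sub, linearizedEval_X_pow_mul_map, hB' u hu, sub_self]
  have := finrank_le_natDegree_of_linearizedEval_eq_zero σ hσ hP hPW
  omega

end Polynomial

theorem FiniteField.mem_range_algebraMap_of_pow_card_pow_eq_self_s5 {K L : Type*} [Field K]
    [Fintype K] [Field L] [Finite L] [Algebra K L] {s : ℕ} (hs : (finrank K L).Coprime s)
    {x : L} (hx : x ^ Fintype.card K ^ s = x) : x ∈ Set.range (algebraMap K L) := by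
  rw [IsGalois.mem_range_algebraMap_iff_fixed]
  intro f
  obtain ⟨j, rfl⟩ := (bijective_frobeniusAlgEquivOfAlgebraic_pow K L).2 f
  obtain ⟨t, ht⟩ :=
    exists_pow_eq_self_of_coprime (x := frobeniusAlgEquivOfAlgebraic K L) (n := s)
      (by rwa [orderOf_frobeniusAlgEquivOfAlgebraic, Nat.coprime_comm])
  dsimp only
  rw [← ht, ← pow_mul, ← pow_mul, AlgEquiv.coe_pow, coe_frobeniusAlgEquivOfAlgebraic_iterate,
    pow_mul, ← pow_iterate]
  exact Function.iterate_fixed hx _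

theorem FiniteField.frobeniusAlgHom_pow_pow_apply {K L : Type*} [Field K] [Fintype K]
    [CommRing L] [Algebra K L] (s j : ℕ) (x : L) :
    ((frobeniusAlgHom K L ^ s) ^ j) x = x ^ Fintype.card K ^ (s * j) := by
  rw [← pow_mul, AlgHom.coe_pow, coe_frobeniusAlgHom, pow_iterate]

theorem stmt5_general (q n m k s : ℕ) (Fq Fqn : Type) [Field Fq] [Fintype Fq] [Field Fqn] [Fintype Fqn]
    [Algebra Fq Fqn] (hq : Fintype.card Fq = q) (hqn : Fintype.card Fqn = q ^ n)
    (hk : 0 < k) (hkm : k < m)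
    (hgcd : Nat.gcd n s = 1)
    (α : Fin m → Fqn) (hα : LinearIndependent Fq α)
    (ψ : Fqn →ₗ[Fq] Fqn)
    -- for every f ∈ G_{k,s} there is g ∈ G_{k,s} with f(ψ(u)) = g(u) for all u ∈ U_S
    (hψ : ∀ a : ℕ → Fqn, ∃ b : ℕ → Fqn, ∀ u ∈ Submodule.span Fq (Set.range α),
        (∑ i ∈ Finset.range k, a i * (ψ u) ^ q ^ (s * i))
          = ∑ i ∈ Finset.range k, b i * u ^ q ^ (s * i)) :
    ∃ b : Fqn, ∀ u ∈ Submodule.span Fq (Set.range α), ψ u = b * u := by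
  subst hq
  set U := Submodule.span Fq (Set.range α)
  set σ := FiniteField.frobeniusAlgHom Fq Fqn ^ s
  have hσ : ∀ j x, (σ ^ j) x = x ^ Fintype.card Fq ^ (s * j) :=
    FiniteField.frobeniusAlgHom_pow_pow_apply s
  have hfinrank : finrank Fq Fqn = n :=
    Nat.pow_right_injective (Fintype.one_lt_card (α := Fq))
      (by simp only [← Module.card_eq_pow_finrank, hqn])
  have hfix : ∀ x, σ x = x → x ∈ Set.range (algebraMap Fq Fqn) := fun x hx ↦
    FiniteField.mem_range_algebraMap_of_pow_card_pow_eq_self_s5 (hfinrank ▸ hgcd)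
      (by rwa [← pow_one σ, hσ, mul_one] at hx)
  have hrep : ∀ t < k, ∃ B : Fqn[X], B.natDegree < k ∧
      ∀ u ∈ U, (σ ^ t) (ψ u) = linearizedEval σ u B := by
    intro t ht
    obtain ⟨b, hb⟩ := hψ fun i ↦ if i = t then 1 else 0
    refine ⟨_, natDegree_sum_range_monomial_lt hk b, fun u hu ↦ ?_⟩
    simp [map_sum, hσ, ← hb u hu, ht]
  obtain ⟨B, hBk, hB⟩ := hrep 0 hk
  have hψB : ∀ u ∈ U, ψ u = linearizedEval σ u B := fun u hu ↦ by
    rw [← hB u hu, pow_zero, AlgHom.one_apply]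
  have hB0 : B.natDegree = 0 := by
    refine natDegree_eq_zero_of_forall_exists_linearizedEval_eq σ hfix
      (by rwa [finrank_span_eq_card hα, Fintype.card_fin]) hBk fun t ht ↦ ?_
    obtain ⟨B', hB'k, hB'⟩ := hrep t ht
    exact ⟨B', hB'k, fun u hu ↦ by rw [← hψB u hu, hB' u hu]⟩
  refine ⟨B.coeff 0, fun u hu ↦ ?_⟩
  rw [hψB u hu, eq_C_of_natDegree_eq_zero hB0, linearizedEval_C, coeff_C_zero]

theorem stmt5 (q n m k s : ℕ) (Fq Fqn : Type) [Field Fq] [Fintype Fq] [Field Fqn] [Fintype Fqn]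
    [Algebra Fq Fqn] (hq : Fintype.card Fq = q) (hqn : Fintype.card Fqn = q ^ n)
    (hn : 0 < n) (hk : 0 < k) (hkm : k < m) (hmn : m ≤ n)
    (hs : 0 < s) (hgcd : Nat.gcd n s = 1)
    (α : Fin m → Fqn) (hα : LinearIndependent Fq α)
    (ψ : Fqn →ₗ[Fq] Fqn)
    -- for every f ∈ G_{k,s} there is g ∈ G_{k,s} with f(ψ(u)) = g(u) for all u ∈ U_S
    (hψ : ∀ a : ℕ → Fqn, ∃ b : ℕ → Fqn, ∀ u ∈ Submodule.span Fq (Set.range α),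
        (∑ i ∈ Finset.range k, a i * (ψ u) ^ q ^ (s * i))
          = ∑ i ∈ Finset.range k, b i * u ^ q ^ (s * i)) :
    ∃ b : Fqn, ∀ u ∈ Submodule.span Fq (Set.range α), ψ u = b * u :=
  stmt5_general q n m k s Fq Fqn hq hqn hk hkm hgcd α hα ψ hψ
end

section
/- Let k = 2 and let m, n satisfy k < m ≤ n. Let H_{2,s}(η,h) and H_{2,s}(η̃,h̃) be generalized twisted Gabidulin codes with η ≠ 0 and η̃ ≠ 0, and assume h̃ ≢ 0 (mod n). Let ψ : F_{q^n} → F_{q^n} be an F_q-linear map such that for every f ∈ H_{2,s}(η,h) there exists g ∈ H_{2,s}(η̃,h̃) with f(ψ(u)) = g(u) for all u ∈ U_S. Then there exists b ∈ F_{q^n} such that ψ(u) = b·u for all u ∈ U_S. -/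
/-!
Let `σ = φ ^ s`, where `φ` is the Frobenius of `F_{q^n}/F_q`; as `gcd(n, s) = 1` it generates the
Galois group, so its fixed field is `F_q`. A σ-polynomial `c₀ X + c₁ σ X + c₂ σ² X` vanishing on
three `F_q`-independent vectors is zero: in degree one, `σ y = λ y` and `σ z = λ z` make `z / y`
σ-fixed; degree two reduces to degree one by dividing out the factor `σ X - (σ w / w) X` that
vanishes at one of the vectors. Applying the hypothesis to `X^{q^s}` and to `t X^{q^s}` with
`t^{q^{h̃}} ≠ t` (possible as `n ∤ h̃`) and subtracting gives such a polynomial, whose leading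
coefficient `η̃ b₀^{q^{h̃}} (t^{q^{h̃}} - t)` forces `b₀ = 0`. Then `ψ(u)^{q^s} = b₁ u^{q^s}` on
`U_S`, so `ψ` is multiplication by the `q^s`-th root of `b₁`.
-/

open Finset

/-- The value at `x` of the polynomial
`a₀X + a₁X^{q^s} + ⋯ + a_{k-1}X^{q^{s(k-1)}} + η a₀^{q^h} X^{q^{sk}}`
belonging to the generalized twisted Gabidulin code `H_{k,s}(η,h)`. -/
def Hval (q s k h : ℕ) {F : Type} [Field F] (η : F) (a : ℕ → F) (x : F) : F :=
  (∑ i ∈ Finset.range k, a i * x ^ q ^ (s * i)) + η * a 0 ^ q ^ h * x ^ q ^ (s * k)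

open Module Submodule FiniteField

section LinearizedPolynomial

variable {K L : Type*} [Field K] [Field L] [Algebra K L] {σ : L →ₐ[K] L}

theorem mem_span_singleton_of_map_eq_mul (hσ : ∀ x, σ x = x → x ∈ Set.range (algebraMap K L))
    {c y z : L} (hy : y ≠ 0) (hσy : σ y = c * y) (hσz : σ z = c * z) : z ∈ K ∙ y := by
  have hc : c ≠ 0 := by
    rintro rfl
    exact map_ne_zero σ |>.mpr hy (by rw [hσy, zero_mul])
  obtain ⟨l, hl⟩ := hσ (z / y) (by rw [map_div₀, hσy, hσz, mul_div_mul_left _ _ hc])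
  exact mem_span_singleton.mpr ⟨l, by rw [Algebra.smul_def, hl, div_mul_cancel₀ _ hy]⟩

theorem linearized_deg_one_coeffs_eq_zero (hσ : ∀ x, σ x = x → x ∈ Set.range (algebraMap K L))
    {c₀ c₁ y z : L} (hyz : LinearIndependent K ![y, z])
    (hy : c₀ * y + c₁ * σ y = 0) (hz : c₀ * z + c₁ * σ z = 0) : c₀ = 0 ∧ c₁ = 0 := by
  have hy0 : y ≠ 0 := by simpa using hyz.ne_zero 0
  by_cases hc₁ : c₁ = 0
  · subst hc₁
    exact ⟨(mul_eq_zero.mp (by simpa using hy)).resolve_right hy0, rfl⟩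
  have eigen : ∀ x, c₀ * x + c₁ * σ x = 0 → σ x = (-c₀ / c₁) * x := fun x hx => by
    field_simp
    linear_combination hx
  obtain ⟨a, hza⟩ := mem_span_singleton.mp
    (mem_span_singleton_of_map_eq_mul hσ hy0 (eigen y hy) (eigen z hz))
  exact absurd hza ((LinearIndependent.pair_iff' hy0).mp hyz a)

theorem linearized_deg_two_coeffs_eq_zero (hσ : ∀ x, σ x = x → x ∈ Set.range (algebraMap K L))
    {c₀ c₁ c₂ : L} {v : Fin 3 → L} (hv : LinearIndependent K v)
    (h : ∀ i, c₀ * v i + c₁ * σ (v i) + c₂ * σ (σ (v i)) = 0) :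
    c₀ = 0 ∧ c₁ = 0 ∧ c₂ = 0 := by
  have hw : v 0 ≠ 0 := hv.ne_zero 0
  set γ := σ (v 0) / v 0
  set D : L →ₗ[K] L := σ.toLinearMap - LinearMap.mulLeft K γ
  have hD : ∀ x, D x = σ x - γ * x := fun _ => rfl
  have hDw : D (v 0) = 0 := by rw [hD, div_mul_cancel₀ _ hw, sub_self]
  set e := c₁ + c₂ * σ γ
  set r := c₀ + e * γ
  have factor : ∀ x, c₀ * x + c₁ * σ x + c₂ * σ (σ x) = e * D x + c₂ * σ (D x) + r * x := by
    intro x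
    simp only [hD, map_sub, map_mul, e, r]
    ring
  have hr : r = 0 := by
    have := factor (v 0)
    rw [h, hDw, map_zero] at this
    exact (mul_eq_zero.mp (by linear_combination -this)).resolve_right hw
  have hDv : LinearIndependent K ![D (v 1), D (v 2)] := by
    refine LinearIndependent.pair_iff.mpr fun a b hab => ?_
    have hker : σ (a • v 1 + b • v 2) = γ * (a • v 1 + b • v 2) := by
      rw [← sub_eq_zero, ← hD, map_add, map_smul, map_smul, hab]
    obtain ⟨l, hl⟩ := mem_span_singleton.mp
      (mem_span_singleton_of_map_eq_mul hσ hw (div_mul_cancel₀ _ hw).symm hker)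
    have := Fintype.linearIndependent_iff.mp hv ![-l, a, b]
      (by simp [Fin.sum_univ_three, hl])
    exact ⟨by simpa using this 1, by simpa using this 2⟩
  obtain ⟨he, hc₂⟩ := linearized_deg_one_coeffs_eq_zero hσ hDv
    (by simpa [factor, hr] using h 1) (by simpa [factor, hr] using h 2)
  refine ⟨?_, ?_, hc₂⟩
  · linear_combination hr - γ * he
  · linear_combination he - σ γ * hc₂

end LinearizedPolynomial

section FiniteField

variable (K L : Type*) [Field K] [Fintype K] [Field L] [Algebra K L]

theorem frobeniusAlgEquivOfAlgebraic_pow_apply [Algebra.IsAlgebraic K L] (k : ℕ) (x : L) :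
    (frobeniusAlgEquivOfAlgebraic K L ^ k) x = x ^ Fintype.card K ^ k := by
  rw [AlgEquiv.coe_pow, coe_frobeniusAlgEquivOfAlgebraic_iterate]

variable {K L} [Finite L]

theorem mem_range_of_frobeniusAlgEquivOfAlgebraic_pow_apply_eq {s : ℕ}
    (hs : (finrank K L).Coprime s) {x : L}
    (hx : (frobeniusAlgEquivOfAlgebraic K L ^ s) x = x) : x ∈ Set.range (algebraMap K L) := by
  set φ := frobeniusAlgEquivOfAlgebraic K L
  have hφ : φ ∈ Subgroup.zpowers (φ ^ s) := by
    rw [mem_zpowers_pow_iff, orderOf_frobeniusAlgEquivOfAlgebraic]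
    exact hs.symm
  have hstab : Subgroup.zpowers (φ ^ s) ≤ MulAction.stabilizer Gal(L/K) x :=
    Subgroup.zpowers_le.mpr hx
  refine (IsGalois.mem_range_algebraMap_iff_fixed x).mpr fun f => ?_
  obtain ⟨k, rfl⟩ := (bijective_frobeniusAlgEquivOfAlgebraic_pow K L).2 f
  exact hstab (Subgroup.pow_mem _ hφ _)

theorem exists_frobeniusAlgEquivOfAlgebraic_pow_apply_ne {k : ℕ} (hk : ¬ finrank K L ∣ k) :
    ∃ t : L, (frobeniusAlgEquivOfAlgebraic K L ^ k) t ≠ t := by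
  by_contra! h
  exact hk (orderOf_frobeniusAlgEquivOfAlgebraic K L ▸ orderOf_dvd_of_pow_eq_one (AlgEquiv.ext h))

end FiniteField

theorem exists_eq_mul_of_forall_comp_eq_twisted {K L : Type*} [Field K] [Field L] [Algebra K L]
    {σ : L ≃ₐ[K] L} (hσ : ∀ x, σ x = x → x ∈ Set.range (algebraMap K L))
    {τ : L →+* L} {t : L} (ht : τ t ≠ t) {η : L} (hη : η ≠ 0)
    {U : Set L} {v : Fin 3 → L} (hv : LinearIndependent K v) (hvU : ∀ i, v i ∈ U) (ψ : L → L)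
    (H : ∀ c : L, ∃ b₀ b₁ : L,
      ∀ u ∈ U, c * σ (ψ u) = b₀ * u + b₁ * σ u + η * τ b₀ * σ (σ u)) :
    ∃ b : L, ∀ u ∈ U, ψ u = b * u := by
  obtain ⟨b₀, b₁, hb⟩ := H 1
  obtain ⟨d₀, d₁, hd⟩ := H t
  obtain ⟨hd₀, -, hτ⟩ := linearized_deg_two_coeffs_eq_zero (σ := (σ : L →ₐ[K] L)) hσ hv
    (c₀ := d₀ - t * b₀) (c₁ := d₁ - t * b₁) (c₂ := η * (τ d₀ - t * τ b₀))
    fun i => by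
      simp only [AlgEquiv.coe_toAlgHom]
      linear_combination t * hb (v i) (hvU i) - hd (v i) (hvU i)
  rw [sub_eq_zero.mp hd₀, map_mul] at hτ
  have hb₀ : b₀ = 0 := by
    have : η * τ b₀ * (τ t - t) = 0 := by linear_combination hτ
    simpa [hη, sub_eq_zero, ht] using this
  refine ⟨σ.symm b₁, fun u hu => σ.injective ?_⟩
  simpa [hb₀] using hb u hu

theorem Hval_two (q s h : ℕ) {F : Type} [Field F] (η : F) (a : ℕ → F) (x : F) :
    Hval q s 2 h η a x = a 0 * x + a 1 * x ^ q ^ s + η * a 0 ^ q ^ h * (x ^ q ^ s) ^ q ^ s := by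
  simp [Hval, Finset.sum_range_succ, ← pow_mul, ← pow_add, mul_two]

theorem stmt8_general (q n m s h h' : ℕ) (Fq Fqn : Type) [Field Fq] [Fintype Fq] [Field Fqn]
    [Fintype Fqn] [Algebra Fq Fqn]
    (hq : Fintype.card Fq = q) (hqn : Fintype.card Fqn = q ^ n)
    (hkm : 2 < m)
    (hgcd : Nat.gcd n s = 1)
    (η η' : Fqn) (hη' : η' ≠ 0)
    -- h̃ ≢ 0 (mod n)
    (hh'0 : ¬ (h' ≡ 0 [MOD n]))
    (α : Fin m → Fqn) (hα : LinearIndependent Fq α)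
    (ψ : Fqn →ₗ[Fq] Fqn)
    -- for every f ∈ H_{2,s}(η,h) there is g ∈ H_{2,s}(η',h') with f(ψ(u)) = g(u) on U_S
    (hψ : ∀ a : ℕ → Fqn, ∃ b : ℕ → Fqn, ∀ u ∈ Submodule.span Fq (Set.range α),
        Hval q s 2 h η a (ψ u) = Hval q s 2 h' η' b u) :
    ∃ b : Fqn, ∀ u ∈ Submodule.span Fq (Set.range α), ψ u = b * u := by
  subst hq
  set φ := frobeniusAlgEquivOfAlgebraic Fq Fqn
  have hn : finrank Fq Fqn = n :=
    Nat.pow_right_injective Fintype.one_lt_card (card_eq_pow_finrank.symm.trans hqn)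
  obtain ⟨t, ht⟩ := exists_frobeniusAlgEquivOfAlgebraic_pow_apply_ne (K := Fq) (L := Fqn)
    (k := h') (by rwa [hn, ← Nat.modEq_zero_iff_dvd])
  have hσ : ∀ x, (φ ^ s) x = x → x ∈ Set.range (algebraMap Fq Fqn) :=
    fun _ => mem_range_of_frobeniusAlgEquivOfAlgebraic_pow_apply_eq (by rwa [hn])
  have hv : LinearIndependent Fq (α ∘ Fin.castLE (by omega : 3 ≤ m)) :=
    hα.comp _ (Fin.castLE_injective _)
  refine exists_eq_mul_of_forall_comp_eq_twisted (U := span Fq (Set.range α))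
    (τ := ((φ ^ h' : Fqn ≃ₐ[Fq] Fqn) : Fqn →+* Fqn))
    hσ ht hη' hv (fun _ => subset_span (R := Fq) (Set.mem_range_self _)) ψ fun c => ?_
  obtain ⟨b, hb⟩ := hψ fun i => if i = 1 then c else 0
  refine ⟨b 0, b 1, fun u hu => ?_⟩
  simpa [Hval_two, frobeniusAlgEquivOfAlgebraic_pow_apply, φ] using hb u hu

theorem stmt8 (q n m s h h' : ℕ) (Fq Fqn : Type) [Field Fq] [Fintype Fq] [Field Fqn]
    [Fintype Fqn] [Algebra Fq Fqn]
    (hq : Fintype.card Fq = q) (hqn : Fintype.card Fqn = q ^ n)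
    (hn : 0 < n) (hkm : 2 < m) (hmn : m ≤ n)
    (hs : 0 < s) (hgcd : Nat.gcd n s = 1) (hh : h < n) (hh' : h' < n)
    (η η' : Fqn) (hη : η ≠ 0) (hη' : η' ≠ 0)
    (hηnorm : η ^ ((q ^ (s * n) - 1) / (q ^ s - 1)) ≠ (-1 : Fqn) ^ (n * 2))
    (hη'norm : η' ^ ((q ^ (s * n) - 1) / (q ^ s - 1)) ≠ (-1 : Fqn) ^ (n * 2))
    -- h̃ ≢ 0 (mod n)
    (hh'0 : ¬ (h' ≡ 0 [MOD n]))
    (α : Fin m → Fqn) (hα : LinearIndependent Fq α)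
    (ψ : Fqn →ₗ[Fq] Fqn)
    -- for every f ∈ H_{2,s}(η,h) there is g ∈ H_{2,s}(η',h') with f(ψ(u)) = g(u) on U_S
    (hψ : ∀ a : ℕ → Fqn, ∃ b : ℕ → Fqn, ∀ u ∈ Submodule.span Fq (Set.range α),
        Hval q s 2 h η a (ψ u) = Hval q s 2 h' η' b u) :
    ∃ b : Fqn, ∀ u ∈ Submodule.span Fq (Set.range α), ψ u = b * u :=
  stmt8_general q n m s h h' Fq Fqn hq hqn hkm hgcd η η' hη' hh'0 α hα ψ hψ
end

section
/- Let k, m, n be positive integers with k < m ≤ n and gcd(n,s) = 1, and assume 1 ∈ S. Let ℓ be the smallest positive integer such that u^{q^ℓ} = u for every u ∈ U_S; then ℓ divides n, and set r = n/ℓ. Then an F_q-linear map φ : F_{q^n} → F_{q^n} satisfies [for every f ∈ G_{k,s} there exists g ∈ G_{k,s} with φ(f(u)) = g(u) for all u ∈ U_S] if and only if there exist c_0, …, c_{r−1} ∈ F_{q^n} such that φ(x) = Σ_{i=0}^{r−1} c_i x^{q^{iℓ}} for all x ∈ F_{q^n}. That is, the right nucleus of π_S(G_{k,s}) is {Σ_{i=0}^{r−1}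 c_i X^{q^{iℓ}} : c_i ∈ F_{q^n}}. -/
/-!
The Frobenius powers `x ↦ x ^ q ^ t`, `t < n`, are a basis of `End_{F_q}(F_{q^n})` over `F_{q^n}`
(Dedekind–Artin), so `φ = ∑_{t<n} c_t x^{q^t}`. Feeding the monomials `x X^{q^{sj}}` (`j < k`) into
the nucleus condition and separating the characters `x ↦ x^{q^t}` shows: whenever `c_t ≠ 0`, each
map `u ↦ u^{q^{t+sj}}` agrees on `U_S` with a `q^s`-polynomial of `q^s`-degree `< k`.

Because `gcd(s, n) = 1`, a `q^s`-polynomial of `q^s`-degree `d` vanishing on an `F_q`-space of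
dimension `> d` is zero (rescale so that `1` is in the space; then the polynomial factors through
`x ↦ x^{q^s} - x`, whose kernel is `F_q`). As `dim U_S = m > k`, representations of length `≤ k + 1`
on `U_S` are unique, and comparing the `q^s`-th power of the representation of `u^{q^{t+sj}}` with
that of `u^{q^{t+s(j+1)}}` kills the top coefficient. Descending in this way reaches
`u^{q^t} = c u` on `U_S`, and `1 ∈ U_S` forces `u^{q^t} = u`, i.e. `ℓ ∣ t`. Conversely the maps
`x^{q^{iℓ}}` fix `U_S` pointwise, so the maps `∑ c_i x^{q^{iℓ}}` lie in the right nucleus.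
-/

open Finset Function Module

theorem isPeriodicPt_pow_iff {M : Type*} [Monoid M] {x : M} {Q j : ℕ} :
    IsPeriodicPt (· ^ Q) j x ↔ x ^ Q ^ j = x := by
  rw [IsPeriodicPt, IsFixedPt, pow_iterate]

theorem pow_pow_gcd_eq_self {M : Type*} [Monoid M] {x : M} {Q a b : ℕ}
    (ha : x ^ Q ^ a = x) (hb : x ^ Q ^ b = x) : x ^ Q ^ a.gcd b = x :=
  isPeriodicPt_pow_iff.1 ((isPeriodicPt_pow_iff.2 ha).gcd (isPeriodicPt_pow_iff.2 hb))

theorem pow_pow_mul_eq_self {M : Type*} [Monoid M] {x : M} {Q a : ℕ}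
    (ha : x ^ Q ^ a = x) (b : ℕ) : x ^ Q ^ (a * b) = x :=
  isPeriodicPt_pow_iff.1 ((isPeriodicPt_pow_iff.2 ha).mul_const b)

theorem dvd_of_forall_pow_pow_eq_self {M : Type*} [Monoid M] {S : Set M} {Q ℓ t : ℕ}
    (hℓpos : 0 < ℓ) (hℓ : ∀ x ∈ S, x ^ Q ^ ℓ = x)
    (hmin : ∀ j, 0 < j → (∀ x ∈ S, x ^ Q ^ j = x) → ℓ ≤ j)
    (ht : ∀ x ∈ S, x ^ Q ^ t = x) : ℓ ∣ t := by
  have hgcd : ℓ ≤ ℓ.gcd t :=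
    hmin _ (Nat.gcd_pos_of_pos_left t hℓpos) fun x hx => pow_pow_gcd_eq_self (hℓ x hx) (ht x hx)
  rw [← Nat.le_antisymm (Nat.gcd_le_left t hℓpos) hgcd]
  exact Nat.gcd_dvd_right ℓ t

theorem sum_range_eq_sum_range_div_of_dvd {M : Type*} [AddCommMonoid M] {ℓ n : ℕ} (hℓ : 0 < ℓ)
    (hℓn : ℓ ∣ n) {f : ℕ → M} (hf : ∀ t < n, f t ≠ 0 → ℓ ∣ t) :
    ∑ t ∈ range n, f t = ∑ i ∈ range (n / ℓ), f (ℓ * i) := by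
  rw [← sum_image fun i _ j _ h => Nat.eq_of_mul_eq_mul_left hℓ h]
  refine (sum_subset ?_ fun t ht hnot => ?_).symm
  · intro t ht
    obtain ⟨i, hi, rfl⟩ := mem_image.1 ht
    exact mem_range.2 ((Nat.lt_div_iff_mul_lt' hℓn i).1 (mem_range.1 hi))
  · by_contra hne
    obtain ⟨i, rfl⟩ := hf t (mem_range.1 ht) hne
    exact hnot <|
      mem_image.2 ⟨i, mem_range.2 ((Nat.lt_div_iff_mul_lt' hℓn i).2 (mem_range.1 ht)), rfl⟩

theorem sum_range_succ_mul_eq_sum_mul_sub {R : Type*} [CommRing R] {N : ℕ} {a : ℕ → R}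
    (ha : ∑ i ∈ range (N + 1), a i = 0) (y : ℕ → R) :
    ∑ i ∈ range (N + 1), a i * y i =
      ∑ i ∈ range N, -(∑ j ∈ range (i + 1), a j) * (y (i + 1) - y i) := by
  have := sum_range_by_parts y a (N + 1)
  simp only [smul_eq_mul, Nat.add_sub_cancel, ha, mul_zero, zero_sub] at this
  rw [← sum_neg_distrib] at this
  rw [sum_congr rfl fun i _ => mul_comm (a i) (y i), this]
  exact sum_congr rfl fun i _ => by ring

theorem LinearIndependent.mem_of_forall_sum_smul_mem {ι X K M : Type*} [Fintype ι] [Field K]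
    [AddCommGroup M] [Module K M] {f : ι → X → K} (hf : LinearIndependent K f)
    {W : Submodule K M} {v : ι → M} (h : ∀ x, ∑ i, f i x • v i ∈ W) (i : ι) : v i ∈ W := by
  rw [← Submodule.Quotient.mk_eq_zero, ← Module.forall_dual_apply_eq_zero_iff K]
  intro ψ
  refine Fintype.linearIndependent_iff.1 hf (fun j => ψ (W.mkQ (v j))) ?_ i
  funext x
  have hx : ψ (W.mkQ (∑ j, f j x • v j)) = 0 := by
    rw [Submodule.mkQ_apply, (Submodule.Quotient.mk_eq_zero W).2 (h x), map_zero]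
  simpa only [map_sum, map_smul, smul_eq_mul, mul_comm, Finset.sum_apply, Pi.smul_apply,
    Pi.zero_apply] using hx

section FiniteField

variable {F K : Type*} [Field F] [Fintype F] [Field K] [Algebra F K] {s k : ℕ}

local notation "q" => Fintype.card F

variable (F) in
theorem frobeniusAlgHom_pow_apply_s13 (t : ℕ) (x : K) :
    (FiniteField.frobeniusAlgHom F K ^ t) x = x ^ q ^ t := by
  rw [AlgHom.coe_pow, FiniteField.coe_frobeniusAlgHom, pow_iterate]

variable (F) in
theorem sub_pow_card_pow (t : ℕ) (x y : K) : (x - y) ^ q ^ t = x ^ q ^ t - y ^ q ^ t := by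
  simpa only [frobeniusAlgHom_pow_apply_s13] using map_sub (FiniteField.frobeniusAlgHom F K ^ t) x y

variable (F) in
theorem sum_pow_card_pow {ι : Type*} (t : ℕ) (s : Finset ι) (x : ι → K) :
    (∑ i ∈ s, x i) ^ q ^ t = ∑ i ∈ s, x i ^ q ^ t := by
  simpa only [frobeniusAlgHom_pow_apply_s13] using map_sum (FiniteField.frobeniusAlgHom F K ^ t) x s

variable (F K) in
def frobeniusPowSubId (s : ℕ) : K →ₗ[F] K :=
  (FiniteField.frobeniusAlgHom F K ^ s).toLinearMap - LinearMap.id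

theorem frobeniusPowSubId_apply (s : ℕ) (x : K) : frobeniusPowSubId F K s x = x ^ q ^ s - x := by
  rw [frobeniusPowSubId, LinearMap.sub_apply, AlgHom.toLinearMap_apply, frobeniusAlgHom_pow_apply_s13,
    LinearMap.id_apply]

theorem exists_one_mem_forall_mem_sum_mul_pow_eq_zero {N : ℕ} {W : Submodule F K} (hW : W ≠ ⊥)
    {a : ℕ → K} (h : ∀ u ∈ W, ∑ i ∈ range N, a i * u ^ q ^ (s * i) = 0) :
    ∃ w ≠ 0, ∃ U : Submodule F K, (1 : K) ∈ U ∧ finrank F U = finrank F W ∧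
      ∀ u ∈ U, ∑ i ∈ range N, a i * w ^ q ^ (s * i) * u ^ q ^ (s * i) = 0 := by
  obtain ⟨w, hwW, hw0⟩ := Submodule.exists_mem_ne_zero_of_ne_bot hW
  have hinj : Injective (LinearMap.mulLeft F w⁻¹) := mul_right_injective₀ (inv_ne_zero hw0)
  refine ⟨w, hw0, W.map (LinearMap.mulLeft F w⁻¹), ⟨w, hwW, inv_mul_cancel₀ hw0⟩,
    (Submodule.equivMapOfInjective _ hinj W).finrank_eq.symm, ?_⟩
  rintro _ ⟨y, hy, rfl⟩
  have hwy : w * (w⁻¹ * y) = y := by rw [← mul_assoc, mul_inv_cancel₀ hw0, one_mul]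
  simpa only [LinearMap.mulLeft_apply, mul_assoc, ← mul_pow, hwy] using h y hy

variable (F) in
def HasLinearizedRep (V : Submodule F K) (s N e : ℕ) : Prop :=
  ∃ a : ℕ → K, ∀ u ∈ V, u ^ q ^ e = ∑ i ∈ range N, a i * u ^ q ^ (s * i)

def MemRightNucleus (V : Submodule F K) (s k : ℕ) (φ : K →ₗ[F] K) : Prop :=
  ∀ a : ℕ → K, ∃ b : ℕ → K, ∀ u ∈ V,
    φ (∑ i ∈ range k, a i * u ^ q ^ (s * i)) = ∑ i ∈ range k, b i * u ^ q ^ (s * i)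

theorem memRightNucleus_of_eq_sum {V : Submodule F K} {ℓ r : ℕ} (hℓ : ∀ u ∈ V, u ^ q ^ ℓ = u)
    {φ : K →ₗ[F] K} {c : ℕ → K} (hc : ∀ x, φ x = ∑ i ∈ range r, c i * x ^ q ^ (ℓ * i)) :
    MemRightNucleus V s k φ := by
  intro a
  refine ⟨fun j => ∑ i ∈ range r, c i * a j ^ q ^ (ℓ * i), fun u hu => ?_⟩
  rw [hc]
  calc ∑ i ∈ range r, c i * (∑ j ∈ range k, a j * u ^ q ^ (s * j)) ^ q ^ (ℓ * i)
      = ∑ i ∈ range r, ∑ j ∈ range k, c i * a j ^ q ^ (ℓ * i) * u ^ q ^ (s * j) := by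
        refine sum_congr rfl fun i _ => ?_
        rw [sum_pow_card_pow, mul_sum]
        refine sum_congr rfl fun j _ => ?_
        rw [mul_pow, ← pow_mul, mul_comm (q ^ (s * j)), pow_mul u, pow_pow_mul_eq_self (hℓ u hu),
          mul_assoc]
    _ = _ := by rw [sum_comm]; simp only [sum_mul]

variable [Fintype K]

theorem mem_range_algebraMap_of_pow_pow_eq_self (hs : s.Coprime (finrank F K))
    {x : K} (hx : x ^ q ^ s = x) : x ∈ Set.range (algebraMap F K) := by
  have hxn : x ^ q ^ finrank F K = x := by
    rw [← Module.card_eq_pow_finrank]; exact FiniteField.pow_card x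
  have hx1 : x ^ q = x := by simpa [hs] using pow_pow_gcd_eq_self hx hxn
  rw [IsGalois.mem_range_algebraMap_iff_fixed]
  intro f
  obtain ⟨i, rfl⟩ := (FiniteField.bijective_frobeniusAlgEquivOfAlgebraic_pow F K).2 f
  rw [AlgEquiv.coe_pow]
  exact iterate_fixed hx1 _

theorem linearIndependent_pow_card_pow :
    LinearIndependent K (fun (t : Fin (finrank F K)) (x : K) => x ^ q ^ (t : ℕ)) := by
  have := (linearIndependent_monoidHom K K).comp
    (fun t : Fin (finrank F K) =>
      ((FiniteField.frobeniusAlgHom F K ^ (t : ℕ) : K →ₐ[F] K) : K →* K))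
    fun t t' h => (FiniteField.bijective_frobeniusAlgHom_pow F K).1
      (AlgHom.ext fun x => DFunLike.congr_fun h x)
  simpa only [comp_def, MonoidHom.coe_coe, AlgHom.coe_pow, FiniteField.coe_frobeniusAlgHom,
    pow_iterate] using this

theorem linearIndependent_frobeniusAlgHom_pow :
    LinearIndependent K
      (fun t : Fin (finrank F K) => (FiniteField.frobeniusAlgHom F K ^ (t : ℕ)).toLinearMap) := by
  refine LinearIndependent.of_comp (LinearMap.ltoFun F K K K) ?_
  convert (linearIndependent_pow_card_pow (F := F) (K := K)) using 1
  ext t x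
  exact frobeniusAlgHom_pow_apply_s13 F t x

theorem exists_eq_sum_pow_card_pow (φ : K →ₗ[F] K) :
    ∃ c : ℕ → K, ∀ x, φ x = ∑ t ∈ range (finrank F K), c t * x ^ q ^ t := by
  have hcard : Fintype.card (Fin (finrank F K)) = finrank K (K →ₗ[F] K) := by
    rw [Fintype.card_fin, finrank_linearMap_self]
  have hspan := linearIndependent_frobeniusAlgHom_pow.span_eq_top_of_card_eq_finrank' hcard
  obtain ⟨c, hc⟩ :=
    (Submodule.mem_span_range_iff_exists_fun K).1 (hspan ▸ Submodule.mem_top (x := φ))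
  refine ⟨fun t => if h : t < finrank F K then c ⟨t, h⟩ else 0, fun x => ?_⟩
  rw [← hc, ← Fin.sum_univ_eq_sum_range]
  simp only [LinearMap.coe_sum, Finset.sum_apply, LinearMap.smul_apply, AlgHom.toLinearMap_apply,
    frobeniusAlgHom_pow_apply_s13, smul_eq_mul, Fin.is_lt, dif_pos]

theorem finrank_le_finrank_range_frobeniusPowSubId_add_one (hs : s.Coprime (finrank F K))
    (U : Submodule F K) :
    finrank F U ≤ finrank F (LinearMap.range (frobeniusPowSubId F K s ∘ₗ U.subtype)) + 1 := by
  set f := frobeniusPowSubId F K s ∘ₗ U.subtype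
  have hker : finrank F (LinearMap.ker f) ≤ 1 := by
    calc finrank F (LinearMap.ker f) = finrank F ((LinearMap.ker f).map U.subtype) :=
          (Submodule.finrank_map_subtype_eq _ _).symm
      _ ≤ finrank F (LinearMap.range (Algebra.linearMap F K)) := by
          refine Submodule.finrank_mono ?_
          rintro _ ⟨u, hu, rfl⟩
          rw [SetLike.mem_coe, LinearMap.mem_ker, LinearMap.comp_apply, frobeniusPowSubId_apply,
            sub_eq_zero] at hu
          obtain ⟨c, hc⟩ := mem_range_algebraMap_of_pow_pow_eq_self hs hu
          exact ⟨c, hc⟩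
      _ ≤ finrank F F := LinearMap.finrank_range_le _
      _ = 1 := finrank_self F
  have := LinearMap.finrank_range_add_finrank_ker f
  omega

theorem eq_zero_of_forall_mem_sum_mul_pow_eq_zero (hs : s.Coprime (finrank F K)) {N : ℕ}
    {W : Submodule F K} (hN : N ≤ finrank F W) {a : ℕ → K}
    (h : ∀ u ∈ W, ∑ i ∈ range N, a i * u ^ q ^ (s * i) = 0) {i : ℕ} (hi : i < N) : a i = 0 := by
  induction N generalizing W a i with
  | zero => exact absurd hi (Nat.not_lt_zero i)
  | succ N ih =>
    wlog h1 : (1 : K) ∈ W generalizing W a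
    · obtain ⟨w, hw0, U, h1U, hU, hUvan⟩ :=
        exists_one_mem_forall_mem_sum_mul_pow_eq_zero (Submodule.one_le_finrank_iff.1 (by omega)) h
      have := this (a := fun i => a i * w ^ q ^ (s * i)) (hU ▸ hN) hUvan h1U
      exact (mul_eq_zero.1 this).resolve_right (pow_ne_zero _ hw0)
    have hsum : ∑ i ∈ range (N + 1), a i = 0 := by simpa using h 1 h1
    -- Abel summation: the polynomial is `∑ βᵢ (x ^ q ^ s - x) ^ q ^ (s * i)`, `βᵢ = -∑_{j ≤ i} aⱼ`
    have hβ : ∀ i < N, -∑ j ∈ range (i + 1), a j = 0 := by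
      refine fun i hi => ih (W := LinearMap.range (frobeniusPowSubId F K s ∘ₗ W.subtype))
        (a := fun i => -∑ j ∈ range (i + 1), a j) ?_ ?_ hi
      · have := finrank_le_finrank_range_frobeniusPowSubId_add_one hs W
        omega
      · rintro _ ⟨u, rfl⟩
        rw [← h u u.2, sum_range_succ_mul_eq_sum_mul_sub hsum]
        refine sum_congr rfl fun i _ => ?_
        rw [LinearMap.comp_apply, Submodule.subtype_apply, frobeniusPowSubId_apply,
          sub_pow_card_pow, ← pow_mul, ← pow_add, mul_add, mul_one, add_comm s]
    have hpartial : ∀ j ≤ N + 1, ∑ i ∈ range j, a i = 0 := by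
      rintro (_ | j) hj
      · exact sum_range_zero a
      · rcases Nat.lt_or_ge j N with hj' | hj'
        · exact neg_eq_zero.1 (hβ j hj')
        · rwa [show j = N by omega]
    have := hpartial (i + 1) hi
    rwa [sum_range_succ, hpartial i hi.le, zero_add] at this

theorem HasLinearizedRep.of_succ (hs : s.Coprime (finrank F K)) {V : Submodule F K} {N e : ℕ}
    (hN : N + 2 ≤ finrank F V) (h : HasLinearizedRep F V s (N + 1) e)
    (h' : HasLinearizedRep F V s (N + 1) (e + s)) : HasLinearizedRep F V s N e := by
  obtain ⟨a, ha⟩ := h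
  obtain ⟨b, hb⟩ := h'
  -- the `q ^ s`-th power of the representation `a` of `u ^ q ^ e`, minus the representation `b`
  -- of `u ^ q ^ (e + s)`, both of length `N + 2`; its top coefficient is `a N ^ q ^ s`
  have hvan : ∀ u ∈ V, ∑ i ∈ range (N + 2),
      ((if i = 0 then 0 else a (i - 1) ^ q ^ s) - if i ≤ N then b i else 0) * u ^ q ^ (s * i) =
        0 := by
    intro u hu
    have hraise : u ^ q ^ (e + s) = ∑ i ∈ range (N + 1), a i ^ q ^ s * u ^ q ^ (s * (i + 1)) := by
      rw [pow_add, pow_mul, ha u hu, sum_pow_card_pow]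
      refine sum_congr rfl fun i _ => ?_
      rw [mul_pow, ← pow_mul, ← pow_add, mul_add, mul_one]
    simp only [sub_mul, sum_sub_distrib, ite_mul, zero_mul]
    rw [sum_range_succ' _ (N + 1), sum_range_succ _ (N + 1)]
    simp only [Nat.add_one_ne_zero, if_false, if_true, Nat.add_sub_cancel, add_zero,
      show ¬ N + 1 ≤ N from by omega]
    rw [sum_congr rfl fun i hi => if_pos (Nat.lt_succ_iff.1 (mem_range.1 hi)), ← hraise, ← hb u hu,
      sub_self]
  have htop := eq_zero_of_forall_mem_sum_mul_pow_eq_zero hs hN hvan (Nat.lt_succ_self (N + 1))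
  simp only [Nat.add_one_ne_zero, if_false, Nat.add_sub_cancel, show ¬ N + 1 ≤ N from by omega,
    sub_zero] at htop
  refine ⟨a, fun u hu => ?_⟩
  rw [ha u hu, sum_range_succ, (pow_eq_zero_iff (pow_ne_zero _ Fintype.card_ne_zero)).1 htop,
    zero_mul, add_zero]

theorem pow_card_pow_eq_self_of_hasLinearizedRep (hs : s.Coprime (finrank F K)) {V : Submodule F K}
    (h1 : (1 : K) ∈ V) (hk : 0 < k) (hkV : k < finrank F V) {t : ℕ}
    (h : ∀ j < k, HasLinearizedRep F V s k (t + s * j)) : ∀ u ∈ V, u ^ q ^ t = u := by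
  have hdesc : ∀ L j, j + L < k → HasLinearizedRep F V s (k - L) (t + s * j) := by
    intro L
    induction L with
    | zero => exact h
    | succ L ih =>
      intro j hj
      have hrep := ih j (by omega)
      have hrep' := ih (j + 1) (by omega)
      rw [show k - L = k - (L + 1) + 1 by omega] at hrep hrep'
      rw [mul_add, mul_one, ← add_assoc] at hrep'
      exact hrep.of_succ hs (by omega) hrep'
  obtain ⟨a, ha⟩ := hdesc (k - 1) 0 (by omega)
  rw [show k - (k - 1) = 1 by omega] at ha
  simp only [add_zero, mul_zero, sum_range_one, pow_zero, pow_one] at ha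
  have ha0 : a 0 = 1 := by simpa using (ha 1 h1).symm
  intro u hu
  rw [ha u hu, ha0, one_mul]

theorem MemRightNucleus.hasLinearizedRep {V : Submodule F K} {φ : K →ₗ[F] K}
    (hφ : MemRightNucleus V s k φ) {c : ℕ → K}
    (hc : ∀ x, φ x = ∑ t ∈ range (finrank F K), c t * x ^ q ^ t) {t : ℕ}
    (ht : t < finrank F K) (hct : c t ≠ 0) {j : ℕ} (hj : j < k) :
    HasLinearizedRep F V s k (t + s * j) := by
  let E : (ℕ → K) →ₗ[K] (V → K) :=
    { toFun := fun b u => ∑ i ∈ range k, b i * (u : K) ^ q ^ (s * i)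
      map_add' := fun b b' => by ext u; simp [add_mul, sum_add_distrib]
      map_smul' := fun c b => by ext u; simp [mul_sum, mul_assoc] }
  have hmem := linearIndependent_pow_card_pow.mem_of_forall_sum_smul_mem (W := LinearMap.range E)
    (v := fun t : Fin (finrank F K) => c t • fun u : V => (u : K) ^ q ^ (t + s * j)) (fun x => ?_)
    ⟨t, ht⟩
  · obtain ⟨b, hb⟩ := (Submodule.smul_mem_iff _ hct).1 hmem
    exact ⟨b, fun u hu => (congrFun hb ⟨u, hu⟩).symm⟩
  obtain ⟨b, hb⟩ := hφ (Pi.single j x)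
  refine ⟨b, funext fun u => ?_⟩
  simp only [E, LinearMap.coe_mk, AddHom.coe_mk, Finset.sum_apply, Pi.smul_apply, smul_eq_mul]
  rw [← hb u u.2,
    Fin.sum_univ_eq_sum_range (fun t => x ^ q ^ t * (c t * (u : K) ^ q ^ (t + s * j))),
    sum_congr rfl fun i _ => by rw [Pi.single_apply, ite_mul, zero_mul], sum_ite_eq',
    if_pos (mem_range.2 hj), hc]
  refine sum_congr rfl fun t _ => ?_
  rw [mul_pow, ← pow_mul, ← pow_add, add_comm (s * j)]
  ring

theorem MemRightNucleus.pow_card_pow_eq_self (hs : s.Coprime (finrank F K)) {V : Submodule F K}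
    (h1 : (1 : K) ∈ V) (hk : 0 < k) (hkV : k < finrank F V) {φ : K →ₗ[F] K}
    (hφ : MemRightNucleus V s k φ) {c : ℕ → K}
    (hc : ∀ x, φ x = ∑ t ∈ range (finrank F K), c t * x ^ q ^ t) {t : ℕ}
    (ht : t < finrank F K) (hct : c t ≠ 0) : ∀ u ∈ V, u ^ q ^ t = u :=
  pow_card_pow_eq_self_of_hasLinearizedRep hs h1 hk hkV fun _ hj => hφ.hasLinearizedRep hc ht hct hj

end FiniteField

theorem stmt13_general (q n m k s ℓ : ℕ) (Fq Fqn : Type) [Field Fq] [Fintype Fq] [Field Fqn]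
    [Fintype Fqn] [Algebra Fq Fqn]
    (hq : Fintype.card Fq = q) (hqn : Fintype.card Fqn = q ^ n)
    (hk : 0 < k) (hkm : k < m)
    (hgcd : Nat.gcd n s = 1)
    (α : Fin m → Fqn) (hα : LinearIndependent Fq α)
    -- 1 ∈ S
    (h1 : (1 : Fqn) ∈ Set.range α)
    -- ℓ is the smallest positive integer with u^{q^ℓ} = u for every u ∈ U_S
    (hℓpos : 0 < ℓ)
    (hℓ : ∀ u ∈ Submodule.span Fq (Set.range α), u ^ q ^ ℓ = u)
    (hℓmin : ∀ j : ℕ, 0 < j → (∀ u ∈ Submodule.span Fq (Set.range α), u ^ q ^ j = u) → ℓ ≤ j) :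
    -- ℓ divides n, and (with r = n/ℓ) an F_q-linear map φ is in the right nucleus of
    -- π_S(G_{k,s}) iff φ(x) = ∑_{i<r} cᵢ x^{q^{iℓ}}
    ℓ ∣ n ∧
      ∀ φ : Fqn →ₗ[Fq] Fqn,
        ((∀ a : ℕ → Fqn, ∃ b : ℕ → Fqn, ∀ u ∈ Submodule.span Fq (Set.range α),
            φ (∑ i ∈ Finset.range k, a i * u ^ q ^ (s * i))
              = ∑ i ∈ Finset.range k, b i * u ^ q ^ (s * i))
          ↔ ∃ c : ℕ → Fqn, ∀ x : Fqn, φ x = ∑ i ∈ Finset.range (n / ℓ), c i * x ^ q ^ (ℓ * i)) := by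
  subst hq
  have hfin : finrank Fq Fqn = n :=
    Nat.pow_right_injective Fintype.one_lt_card (Module.card_eq_pow_finrank.symm.trans hqn)
  have hdvd : ∀ t, (∀ u ∈ Submodule.span Fq (Set.range α), u ^ Fintype.card Fq ^ t = u) → ℓ ∣ t :=
    fun t => dvd_of_forall_pow_pow_eq_self hℓpos hℓ hℓmin
  have hℓn : ℓ ∣ n := hdvd n fun u _ => hqn ▸ FiniteField.pow_card u
  refine ⟨hℓn, fun φ => ⟨fun hφ => ?_, fun ⟨c, hc⟩ => memRightNucleus_of_eq_sum hℓ hc⟩⟩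
  have hsn : s.Coprime (finrank Fq Fqn) := hfin ▸ Nat.coprime_comm.1 hgcd
  have hkV : k < finrank Fq (Submodule.span Fq (Set.range α)) := by
    rwa [finrank_span_eq_card hα, Fintype.card_fin]
  obtain ⟨c, hc⟩ := exists_eq_sum_pow_card_pow φ
  refine ⟨fun i => c (ℓ * i), fun x => ?_⟩
  rw [hc, ← hfin]
  refine sum_range_eq_sum_range_div_of_dvd hℓpos (hfin ▸ hℓn) fun t ht hct => hdvd t ?_
  exact MemRightNucleus.pow_card_pow_eq_self hsn (Submodule.subset_span h1) hk hkV hφ hc ht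
    (left_ne_zero_of_mul hct)

theorem stmt13 (q n m k s ℓ : ℕ) (Fq Fqn : Type) [Field Fq] [Fintype Fq] [Field Fqn]
    [Fintype Fqn] [Algebra Fq Fqn]
    (hq : Fintype.card Fq = q) (hqn : Fintype.card Fqn = q ^ n)
    (hn : 0 < n) (hk : 0 < k) (hkm : k < m) (hmn : m ≤ n)
    (hs : 0 < s) (hgcd : Nat.gcd n s = 1)
    (α : Fin m → Fqn) (hα : LinearIndependent Fq α)
    -- 1 ∈ S
    (h1 : (1 : Fqn) ∈ Set.range α)
    -- ℓ is the smallest positive integer with u^{q^ℓ} = u for every u ∈ U_S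
    (hℓpos : 0 < ℓ)
    (hℓ : ∀ u ∈ Submodule.span Fq (Set.range α), u ^ q ^ ℓ = u)
    (hℓmin : ∀ j : ℕ, 0 < j → (∀ u ∈ Submodule.span Fq (Set.range α), u ^ q ^ j = u) → ℓ ≤ j) :
    -- ℓ divides n, and (with r = n/ℓ) an F_q-linear map φ is in the right nucleus of
    -- π_S(G_{k,s}) iff φ(x) = ∑_{i<r} cᵢ x^{q^{iℓ}}
    ℓ ∣ n ∧
      ∀ φ : Fqn →ₗ[Fq] Fqn,
        ((∀ a : ℕ → Fqn, ∃ b : ℕ → Fqn, ∀ u ∈ Submodule.span Fq (Set.range α),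
            φ (∑ i ∈ Finset.range k, a i * u ^ q ^ (s * i))
              = ∑ i ∈ Finset.range k, b i * u ^ q ^ (s * i))
          ↔ ∃ c : ℕ → Fqn, ∀ x : Fqn, φ x = ∑ i ∈ Finset.range (n / ℓ), c i * x ^ q ^ (ℓ * i)) :=
  stmt13_general q n m k s ℓ Fq Fqn hq hqn hk hkm hgcd α hα h1 hℓpos hℓ hℓmin
end
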